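/- arXiv:2112.02248 — 6 statements merged into one kernel-verified Lean document; each statement's English description precedes it below -/
import Mathlib

section
/- For any connected graph G, the number of internal vertices in a maximum internal spanning tree of G is at most |E(P*)| - 1, where P* is an optimal path cover of G (a path cover with maximum number of edges). -/
open SimpleGraph

/-- `T` is a spanning tree of `G`. -/
def IsSpanningTreeOf {V : Type*} (G T : SimpleGraph V) : Prop :=
  T ≤ G ∧ T.IsTree

/-- The number of internal vertices (vertices of degree at least 2) of a graph. -/
noncomputable def internalCount {V : Type*} (T : SimpleGraph V) : ℕ :=
  {v | 2 ≤ (T.neighborSet v).ncard}.ncard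

/-- The number of leaves (vertices of degree exactly 1) of a graph. -/
noncomputable def leafCount {V : Type*} (T : SimpleGraph V) : ℕ :=
  {v | (T.neighborSet v).ncard = 1}.ncard

/-- `P` is a path cover of `G`: a spanning subgraph each of whose connected
components is a path, i.e. an acyclic subgraph of maximum degree at most 2. -/
def IsPathCoverOf {V : Type*} (G P : SimpleGraph V) : Prop :=
  P ≤ G ∧ P.IsAcyclic ∧ ∀ v, (P.neighborSet v).ncard ≤ 2

/-- `P` is an optimal path cover of `G`: a path cover with the maximum number of edges. -/
def IsOptPathCoverOf {V : Type*} (G P : SimpleGraph V) : Prop :=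
  IsPathCoverOf G P ∧ ∀ Q, IsPathCoverOf G Q → Q.edgeSet.ncard ≤ P.edgeSet.ncard

lemma ncard_neighborSet_eq_degree {V : Type*} [Fintype V] (G : SimpleGraph V)
    [DecidableRel G.Adj] (v : V) : (G.neighborSet v).ncard = G.degree v := by
  rw [← SimpleGraph.card_neighborSet_eq_degree, Set.ncard_eq_toFinset_card', Set.toFinset_card]

lemma ncard_edgeSet_eq {V : Type*} [Fintype V] (G : SimpleGraph V)
    [DecidableRel G.Adj] : G.edgeSet.ncard = G.edgeFinset.card := by
  rw [Set.ncard_eq_toFinset_card', Set.toFinset_card, ← SimpleGraph.edgeFinset_card]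

/-- Key construction: from a spanning tree one obtains a path cover (of the tree)
with at least `internalCount T + 1` edges. -/
lemma exists_good_path_cover {V : Type*} [Fintype V] (T : SimpleGraph V)
    (hT : T.IsTree) (hcard : 2 ≤ Fintype.card V) :
    ∃ Q : SimpleGraph V, Q ≤ T ∧ Q.IsAcyclic ∧ (∀ v, (Q.neighborSet v).ncard ≤ 2) ∧
      internalCount T + 1 ≤ Q.edgeSet.ncard := by
  classical
  -- every vertex has degree at least 1
  have hdeg1 : ∀ v, 1 ≤ T.degree v := by
    intro v
    obtain ⟨w, hw⟩ := Fintype.exists_ne_of_one_lt_card (by omega) v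
    obtain ⟨p⟩ := hT.isConnected.preconnected v w
    cases p with
    | nil => exact absurd rfl hw
    | cons h _ => exact (T.degree_pos_iff_exists_adj v).2 ⟨_, h⟩
  -- choose edges to delete at each vertex
  have hch : ∀ v : V, ∃ s ⊆ T.neighborFinset v, s.card = T.degree v - 2 := by
    intro v
    exact Finset.exists_subset_card_eq (Nat.sub_le _ _)
  choose N hNsub hNcard using hch
  set Q : SimpleGraph V :=
    { Adj := fun a b => T.Adj a b ∧ b ∉ N a ∧ a ∉ N b
      symm := by constructor; intro a b h; exact ⟨h.1.symm, h.2.2, h.2.1⟩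
      loopless := by constructor; intro a h; exact T.loopless.irrefl a h.1 } with hQdef
  have hQle : Q ≤ T := fun a b h => h.1
  refine ⟨Q, hQle, ?_, ?_, ?_⟩
  · intro v c hc
    exact hT.IsAcyclic (c.mapLe hQle) (hc.mapLe hQle)
  · intro v
    rw [ncard_neighborSet_eq_degree]
    have hsub : Q.neighborFinset v ⊆ T.neighborFinset v \ N v := by
      intro w hw
      rw [SimpleGraph.mem_neighborFinset] at hw
      rw [Finset.mem_sdiff, SimpleGraph.mem_neighborFinset]
      exact ⟨hw.1, hw.2.1⟩
    have := Finset.card_le_card hsub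
    rw [Finset.card_sdiff_of_subset (hNsub v), hNcard v] at this
    have hcc : (T.neighborFinset v).card = T.degree v := rfl
    rw [hcc] at this
    have hd : (Q.neighborFinset v).card = Q.degree v := rfl
    rw [hd] at this
    omega
  · -- edge counting
    rw [ncard_edgeSet_eq]
    set D : Finset (Sym2 V) :=
      Finset.univ.biUnion (fun v => (N v).image (fun w => s(v, w))) with hD
    have hsubD : T.edgeFinset \ Q.edgeFinset ⊆ D := by
      intro e he
      induction e with
      | _ a b =>
        rw [Finset.mem_sdiff, SimpleGraph.mem_edgeFinset, SimpleGraph.mem_edgeFinset,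
          SimpleGraph.mem_edgeSet, SimpleGraph.mem_edgeSet] at he
        obtain ⟨hab, hnab⟩ := he
        have : b ∈ N a ∨ a ∈ N b := by
          by_contra h
          push_neg at h
          exact hnab ⟨hab, h.1, h.2⟩
        rw [hD, Finset.mem_biUnion]
        rcases this with h | h
        · exact ⟨a, Finset.mem_univ a, Finset.mem_image.2 ⟨b, h, rfl⟩⟩
        · exact ⟨b, Finset.mem_univ b, Finset.mem_image.2 ⟨a, h, Sym2.eq_swap⟩⟩
    have hDcard : D.card ≤ ∑ v, (T.degree v - 2) := by
      refine le_trans (Finset.card_biUnion_le) ?_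
      refine Finset.sum_le_sum ?_
      intro v _
      exact le_trans (Finset.card_image_le) (le_of_eq (hNcard v))
    -- degree sum identities
    have hsum : (∑ v, (T.degree v - 2)) + (∑ v, min (T.degree v) 2)
        = 2 * T.edgeFinset.card := by
      rw [← Finset.sum_add_distrib, ← SimpleGraph.sum_degrees_eq_twice_card_edges]
      refine Finset.sum_congr rfl ?_
      intro v _
      omega
    set L : Finset V := Finset.univ.filter (fun v => T.degree v = 1) with hL
    set I : Finset V := Finset.univ.filter (fun v => ¬ T.degree v = 1) with hI
    have hmin : (∑ v, min (T.degree v) 2) = L.card + 2 * I.card := by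
      rw [← Finset.sum_filter_add_sum_filter_not Finset.univ (fun v => T.degree v = 1)]
      have h1 : ∑ v ∈ L, min (T.degree v) 2 = L.card := by
        rw [Finset.sum_congr rfl (fun v hv => ?_), Finset.sum_const, smul_eq_mul, mul_one]
        rw [hL, Finset.mem_filter] at hv
        omega
      have h2 : ∑ v ∈ I, min (T.degree v) 2 = 2 * I.card := by
        rw [Finset.sum_congr rfl (fun v hv => ?_), Finset.sum_const, smul_eq_mul, mul_comm]
        rw [hI, Finset.mem_filter] at hv
        have := hdeg1 v
        omega
      rw [← hL, ← hI, h1, h2]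
    have hLI : L.card + I.card = Fintype.card V := by
      rw [hL, hI, Finset.card_filter_add_card_filter_not, Finset.card_univ]
    have hint : internalCount T = I.card := by
      unfold internalCount
      have : {v | 2 ≤ (T.neighborSet v).ncard} = (I : Set V) := by
        ext v
        simp only [Set.mem_setOf_eq, hI, Finset.coe_filter, Finset.mem_univ, true_and,
          Set.mem_setOf_eq, ncard_neighborSet_eq_degree]
        have := hdeg1 v
        omega
      rw [this, Set.ncard_coe_finset]
    have hQT : Q.edgeFinset ⊆ T.edgeFinset := by
      intro e he
      rw [SimpleGraph.mem_edgeFinset] at *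
      exact SimpleGraph.edgeSet_mono hQle he
    have hr : Q.edgeFinset.card + (T.edgeFinset \ Q.edgeFinset).card
        = T.edgeFinset.card := by
      rw [Finset.card_sdiff_of_subset hQT]
      have := Finset.card_le_card hQT
      omega
    have heT : T.edgeFinset.card + 1 = Fintype.card V := hT.card_edgeFinset
    have hrD := Finset.card_le_card hsubD
    rw [hint]
    omega

theorem stmt2 {V : Type*} [Fintype V] (G : SimpleGraph V) (hG : G.Connected)
    (hcard : 2 ≤ Fintype.card V)
    (P : SimpleGraph V) (hP : IsOptPathCoverOf G P)
    (T : SimpleGraph V) (hT : IsSpanningTreeOf G T) :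
    internalCount T ≤ P.edgeSet.ncard - 1 := by
  obtain ⟨Q, hQle, hQac, hQdeg, hQcard⟩ := exists_good_path_cover T hT.2 hcard
  have hQG : IsPathCoverOf G Q := ⟨le_trans hQle hT.1, hQac, hQdeg⟩
  have := hP.2 Q hQG
  omega
end

section
/- For every positive integer k there exists a connected graph G on n = 5k vertices that is both a block graph and a cactus graph, with an optimal path cover P* satisfying Opt(G) = |E(P*)| - k, where Opt(G) is the maximum number of internal vertices over all spanning trees of G. Hence there is no constant c such that Opt(G) ≥ |E(P*)| - c for all block (or cactus) graphs. -/
open SimpleGraph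

/-- `v` is a cut vertex of `G`: deleting `v` disconnects the graph. -/
def IsCutVertex {V : Type*} (G : SimpleGraph V) (v : V) : Prop :=
  ¬ (G.induce {u | u ≠ v}).Connected

/-- `B` is a block of `G`: a maximal vertex set inducing a connected subgraph
with no cut vertex of its own. -/
def IsBlock {V : Type*} (G : SimpleGraph V) (B : Set V) : Prop :=
  B.Nonempty ∧ (G.induce B).Connected ∧ (∀ v, ¬ IsCutVertex (G.induce B) v) ∧
  ∀ C : Set V, B ⊆ C → (G.induce C).Connected →
    (∀ v, ¬ IsCutVertex (G.induce C) v) → B = C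

/-- The induced subgraph on `B` has a Hamiltonian (spanning) path from `u` to `v`. -/
def HasHamPathBetween {V : Type*} [DecidableEq V] (G : SimpleGraph V) (B : Set V)
    (u v : V) : Prop :=
  ∃ (hu : u ∈ B) (hv : v ∈ B) (p : (G.induce B).Walk ⟨u, hu⟩ ⟨v, hv⟩), p.IsHamiltonian

/-- A block `B` of `G` is good if it contains two distinct cut vertices of `G` joined
by a Hamiltonian path of the block. -/
def IsGoodBlock {V : Type*} [DecidableEq V] (G : SimpleGraph V) (B : Set V) : Prop :=
  ∃ u v, u ≠ v ∧ u ∈ B ∧ v ∈ B ∧ IsCutVertex G u ∧ IsCutVertex G v ∧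
    HasHamPathBetween G B u v

/-- A block is bad if it is not good. -/
def IsBadBlock {V : Type*} [DecidableEq V] (G : SimpleGraph V) (B : Set V) : Prop :=
  IsBlock G B ∧ ¬ IsGoodBlock G B

/-- A block graph: every block induces a complete subgraph. -/
def IsBlockGraph {V : Type*} (G : SimpleGraph V) : Prop :=
  ∀ B : Set V, IsBlock G B → ∀ x ∈ B, ∀ y ∈ B, x ≠ y → G.Adj x y

/-- A cactus graph: every block is a single edge or a cycle
(a connected 2-regular induced subgraph). -/
def IsCactusGraph {V : Type*} (G : SimpleGraph V) : Prop :=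
  ∀ B : Set V, IsBlock G B →
    (∃ x y, x ≠ y ∧ B = {x, y}) ∨ (∀ v : B, ((G.induce B).neighborSet v).ncard = 2)

/-- `G` has at least two blocks. -/
def HasAtLeastTwoBlocks {V : Type*} (G : SimpleGraph V) : Prop :=
  ∃ B₁ B₂ : Set V, IsBlock G B₁ ∧ IsBlock G B₂ ∧ B₁ ≠ B₂

namespace Stmt10

def grel (u v : ℕ) : Prop :=
  (u / 5 = v / 5 ∧ ((u % 5 = 0 ∧ v % 5 = 1) ∨ (u % 5 = 0 ∧ v % 5 = 2) ∨
    (u % 5 = 1 ∧ v % 5 = 2) ∨ (u % 5 = 1 ∧ v % 5 = 3) ∨ (u % 5 = 2 ∧ v % 5 = 4))) ∨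
  (u % 5 = 0 ∧ v % 5 = 0 ∧ v / 5 = u / 5 + 1)

def prel (u v : ℕ) : Prop :=
  u / 5 = v / 5 ∧ ((u % 5 = 0 ∧ v % 5 = 1) ∨ (u % 5 = 0 ∧ v % 5 = 2) ∨
    (u % 5 = 1 ∧ v % 5 = 3) ∨ (u % 5 = 2 ∧ v % 5 = 4))

def srel (u v : ℕ) : Prop := u % 5 = 0 ∧ v % 5 = 0 ∧ v / 5 = u / 5 + 1

instance grel.dec : ∀ u v, Decidable (grel u v) := fun u v => by unfold grel; infer_instance
instance prel.dec : ∀ u v, Decidable (prel u v) := fun u v => by unfold prel; infer_instance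
instance srel.dec : ∀ u v, Decidable (srel u v) := fun u v => by unfold srel; infer_instance

def GG (k : ℕ) : SimpleGraph (Fin (5 * k)) := fromRel (fun u v => grel u.val v.val)
def PP (k : ℕ) : SimpleGraph (Fin (5 * k)) := fromRel (fun u v => prel u.val v.val)
def SS (k : ℕ) : SimpleGraph (Fin (5 * k)) := fromRel (fun u v => srel u.val v.val)
def TT (k : ℕ) : SimpleGraph (Fin (5 * k)) := PP k ⊔ SS k

variable {k : ℕ}

lemma GG_adj {u v : Fin (5 * k)} :
    (GG k).Adj u v ↔ u.val ≠ v.val ∧ (grel u.val v.val ∨ grel v.val u.val) := by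
  simp [GG, fromRel_adj, ne_eq, Fin.ext_iff]

lemma PP_adj {u v : Fin (5 * k)} :
    (PP k).Adj u v ↔ u.val ≠ v.val ∧ (prel u.val v.val ∨ prel v.val u.val) := by
  simp [PP, fromRel_adj, ne_eq, Fin.ext_iff]

lemma SS_adj {u v : Fin (5 * k)} :
    (SS k).Adj u v ↔ u.val ≠ v.val ∧ (srel u.val v.val ∨ srel v.val u.val) := by
  simp [SS, fromRel_adj, ne_eq, Fin.ext_iff]

lemma TT_adj {u v : Fin (5 * k)} :
    (TT k).Adj u v ↔ u.val ≠ v.val ∧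
      (prel u.val v.val ∨ prel v.val u.val ∨ srel u.val v.val ∨ srel v.val u.val) := by
  simp only [TT, sup_adj, PP_adj, SS_adj]
  tauto

lemma PP_le_GG : PP k ≤ GG k := by
  intro u v h
  rw [PP_adj] at h
  rw [GG_adj]
  refine ⟨h.1, ?_⟩
  rcases h.2 with h2 | h2 <;> [left; right] <;>
    · unfold prel at h2
      unfold grel
      omega

lemma SS_le_GG : SS k ≤ GG k := by
  intro u v h
  rw [SS_adj] at h
  rw [GG_adj]
  refine ⟨h.1, ?_⟩
  rcases h.2 with h2 | h2 <;> [left; right] <;>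
    · unfold srel at h2
      unfold grel
      omega

lemma TT_le_GG : TT k ≤ GG k := sup_le PP_le_GG SS_le_GG

lemma walk_stay {V : Type*} {G : SimpleGraph V} {S : Set V}
    (hS : ∀ s t, G.Adj s t → s ∈ S → t ∈ S) {a b : V} (p : G.Walk a b) (ha : a ∈ S) :
    b ∈ S := by
  induction p with
  | nil => exact ha
  | cons h p ih => exact ih (hS _ _ h ha)

lemma sep_contra {V : Type*} {G : SimpleGraph V} {B : Set V}
    (hc : (G.induce B).Connected) (hnc : ∀ v, ¬ IsCutVertex (G.induce B) v)
    (S : Set V) (z : V) (hzS : z ∉ S)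
    (hbd : ∀ s t, G.Adj s t → s ∈ S → t ∉ S → t = z)
    {u w : V} (hu : u ∈ B) (hw : w ∈ B) (huS : u ∈ S) (hwS : w ∉ S) (hwz : w ≠ z) :
    False := by
  by_cases hzB : z ∈ B
  · have hconn : ((G.induce B).induce {t | t ≠ (⟨z, hzB⟩ : B)}).Connected :=
      not_not.mp (hnc ⟨z, hzB⟩)
    have huz : u ≠ z := fun h => hzS (h ▸ huS)
    obtain ⟨p⟩ := hconn.preconnected
      ⟨⟨u, hu⟩, by simp [Subtype.ext_iff, huz]⟩ ⟨⟨w, hw⟩, by simp [Subtype.ext_iff, hwz]⟩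
    refine hwS (walk_stay (S := {t : {t : B // t ≠ ⟨z, hzB⟩} | (t : B).val ∈ S}) ?_ p huS)
    intro s t hadj hs
    have hGadj : G.Adj s.val.val t.val.val := hadj
    by_contra ht
    exact t.prop (Subtype.ext (hbd _ _ hGadj hs ht))
  · obtain ⟨p⟩ := hc.preconnected ⟨u, hu⟩ ⟨w, hw⟩
    refine hwS (walk_stay (S := {t : B | t.val ∈ S}) ?_ p huS)
    intro s t hadj hs
    by_contra ht
    exact hzB ((hbd _ _ hadj hs ht) ▸ t.prop)

lemma sep_bridge {V : Type*} {G : SimpleGraph V} (S : Set V) {u v : V}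
    (hadj : G.Adj u v) (huS : u ∈ S) (hvS : v ∉ S)
    (hbd : ∀ s t, G.Adj s t → s ∈ S → t ∉ S → s = u ∧ t = v) :
    G.IsBridge s(u, v) := by
  rw [isBridge_iff]
  refine fun hreach => ?_
  obtain ⟨p⟩ := hreach
  refine hvS (walk_stay (S := S) ?_ p huS)
  intro s t hst hs
  rw [deleteEdges_adj] at hst
  by_contra ht
  obtain ⟨hsu, htv⟩ := hbd s t hst.1 hs ht
  subst hsu; subst htv
  exact hst.2 (by simp [hadj.ne])

lemma TT_reach (hk : 0 < k) : ∀ n, ∀ v : Fin (5 * k), v.val ≤ n →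
    (TT k).Reachable v ⟨0, by omega⟩ := by
  intro n
  induction n with
  | zero =>
    intro v hv
    have : v = ⟨0, by omega⟩ := Fin.ext (by simp only [Fin.val_mk]; omega)
    rw [this]
  | succ n ih =>
    intro v hv
    by_cases h0 : v.val = 0
    · have : v = ⟨0, by omega⟩ := Fin.ext (by simp only [Fin.val_mk]; omega)
      rw [this]
    · have hv5 := v.isLt
      have hroles : v.val % 5 = 0 ∨ v.val % 5 = 1 ∨ v.val % 5 = 2 ∨ v.val % 5 = 3 ∨
          v.val % 5 = 4 := by omega
      have step : ∀ c : ℕ, 0 < c → c ≤ v.val →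
          (TT k).Adj v ⟨v.val - c, by omega⟩ → (TT k).Reachable v ⟨0, by omega⟩ := by
        intro c hc hcv hadj
        exact hadj.reachable.trans (ih ⟨v.val - c, by omega⟩ (by simp only [Fin.val_mk]; omega))
      rcases hroles with h | h | h | h | h
      · refine step 5 (by omega) (by omega) ?_
        rw [TT_adj]; simp only [prel, srel, Fin.val_mk]; omega
      · refine step 1 (by omega) (by omega) ?_
        rw [TT_adj]; simp only [prel, srel, Fin.val_mk]; omega
      · refine step 2 (by omega) (by omega) ?_
        rw [TT_adj]; simp only [prel, srel, Fin.val_mk]; omega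
      · refine step 2 (by omega) (by omega) ?_
        rw [TT_adj]; simp only [prel, srel, Fin.val_mk]; omega
      · refine step 2 (by omega) (by omega) ?_
        rw [TT_adj]; simp only [prel, srel, Fin.val_mk]; omega

lemma TT_connected (hk : 0 < k) : (TT k).Connected := by
  have h0 : (0 : ℕ) < 5 * k := by omega
  haveI : Nonempty (Fin (5 * k)) := ⟨⟨0, h0⟩⟩
  exact ⟨fun a b => (TT_reach hk a.val a le_rfl).trans (TT_reach hk b.val b le_rfl).symm⟩




lemma TT_acyclic (hk : 0 < k) : (TT k).IsAcyclic := by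
  rw [isAcyclic_iff_forall_adj_isBridge]
  intro u v huv
  -- reduce to oriented cases
  have key : ∀ a b : Fin (5 * k), (TT k).Adj a b →
      (prel a.val b.val ∨ srel a.val b.val) → (TT k).IsBridge s(a, b) := by
    intro a b hab hor
    rcases hor with hp | hs
    · unfold prel at hp
      rcases hp.2 with ⟨h1, h2⟩ | ⟨h1, h2⟩ | ⟨h1, h2⟩ | ⟨h1, h2⟩
      · -- a–x edge : separate {x_i, p_i}
        have := sep_bridge (G := TT k)
          {w : Fin (5 * k) | w.val / 5 = a.val / 5 ∧ (w.val % 5 = 1 ∨ w.val % 5 = 3)}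
          hab.symm (by exact ⟨hp.1.symm, by omega⟩) (by simp; omega) ?_
        · rwa [Sym2.eq_swap] at this
        · intro s t hst hsS htS
          rw [TT_adj] at hst
          simp only [Set.mem_setOf_eq, not_and, not_or] at hsS htS
          unfold prel srel at hst
          refine ⟨Fin.ext ?_, Fin.ext ?_⟩ <;> omega
      · -- a–y edge : separate {y_i, q_i}
        have := sep_bridge (G := TT k)
          {w : Fin (5 * k) | w.val / 5 = a.val / 5 ∧ (w.val % 5 = 2 ∨ w.val % 5 = 4)}
          hab.symm (by exact ⟨hp.1.symm, by omega⟩) (by simp; omega) ?_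
        · rwa [Sym2.eq_swap] at this
        · intro s t hst hsS htS
          rw [TT_adj] at hst
          simp only [Set.mem_setOf_eq, not_and, not_or] at hsS htS
          unfold prel srel at hst
          refine ⟨Fin.ext ?_, Fin.ext ?_⟩ <;> omega
      · -- x–p edge : separate {p_i}
        have := sep_bridge (G := TT k) {w : Fin (5 * k) | w.val = b.val}
          hab.symm (by simp) (by simp; omega) ?_
        · rwa [Sym2.eq_swap] at this
        · intro s t hst hsS htS
          rw [TT_adj] at hst
          simp only [Set.mem_setOf_eq] at hsS htS
          unfold prel srel at hst
          refine ⟨Fin.ext ?_, Fin.ext ?_⟩ <;> omega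
      · -- y–q edge : separate {q_i}
        have := sep_bridge (G := TT k) {w : Fin (5 * k) | w.val = b.val}
          hab.symm (by simp) (by simp; omega) ?_
        · rwa [Sym2.eq_swap] at this
        · intro s t hst hsS htS
          rw [TT_adj] at hst
          simp only [Set.mem_setOf_eq] at hsS htS
          unfold prel srel at hst
          refine ⟨Fin.ext ?_, Fin.ext ?_⟩ <;> omega
    · -- spine edge a_i – a_{i+1} : separate upper gadgets
      unfold srel at hs
      have := sep_bridge (G := TT k) {w : Fin (5 * k) | b.val / 5 ≤ w.val / 5}
        hab.symm (by simp) (by simp; omega) ?_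
      · rwa [Sym2.eq_swap] at this
      · intro s t hst hsS htS
        rw [TT_adj] at hst
        simp only [Set.mem_setOf_eq, not_le] at hsS htS
        unfold prel srel at hst
        refine ⟨Fin.ext ?_, Fin.ext ?_⟩ <;> omega
  have h2 := huv
  rw [TT_adj] at h2
  rcases h2.2 with h | h | h | h
  · exact key u v huv (Or.inl h)
  · rw [Sym2.eq_swap]; exact key v u huv.symm (Or.inl h)
  · exact key u v huv (Or.inr h)
  · rw [Sym2.eq_swap]; exact key v u huv.symm (Or.inr h)

lemma TT_isTree (hk : 0 < k) : (TT k).IsTree := ⟨TT_connected hk, TT_acyclic hk⟩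

lemma PP_le_TT : PP k ≤ TT k := le_sup_left

lemma PP_acyclic (hk : 0 < k) : (PP k).IsAcyclic := by
  intro v c hc
  exact TT_acyclic hk (c.mapLe PP_le_TT) (hc.mapLe PP_le_TT)



lemma filter_range_succ5 (p : ℕ → Prop) [DecidablePred p] (k : ℕ) :
    ((Finset.range (5 * (k + 1))).filter p).card
      = ((Finset.range (5 * k)).filter p).card +
        ((Finset.range 5).filter (fun j => p (5 * k + j))).card := by
  have hdisj : Disjoint ((Finset.range (5 * k)).filter p)
      (((Finset.range 5).map (addLeftEmbedding (5 * k))).filter p) := by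
    refine Finset.disjoint_filter_filter (Finset.disjoint_left.mpr ?_)
    intro a ha hb
    simp only [Finset.mem_range] at ha
    simp only [Finset.mem_map, Finset.mem_range, addLeftEmbedding_apply] at hb
    obtain ⟨j, hj, rfl⟩ := hb
    omega
  rw [show 5 * (k + 1) = 5 * k + 5 by ring, Finset.range_add, Finset.filter_union,
    Finset.card_union_of_disjoint hdisj, Finset.filter_map, Finset.card_map]
  have : ∀ j ∈ Finset.range 5, (p ∘ ⇑(addLeftEmbedding (5 * k))) j ↔ p (5 * k + j) := by
    intro j _
    simp [addLeftEmbedding_apply]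
  rw [Finset.filter_congr this]

lemma count_le2 : ∀ k, ((Finset.range (5 * k)).filter (fun n => n % 5 ≤ 2)).card = 3 * k := by
  intro k
  induction k with
  | zero => simp
  | succ k ih =>
    rw [filter_range_succ5, ih]
    have h2 : ((Finset.range 5).filter (fun j => (5 * k + j) % 5 ≤ 2))
        = ((Finset.range 5).filter (fun j => j ≤ 2)) := by
      apply Finset.filter_congr
      intro j hj
      simp only [Finset.mem_range] at hj
      constructor <;> intro h <;> omega
    rw [h2, show ((Finset.range 5).filter (fun j => j ≤ 2)).card = 3 from rfl]
    ring

lemma count_fin_le2 : ((Finset.univ : Finset (Fin (5 * k))).filter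
    (fun v => v.val % 5 ≤ 2)).card = 3 * k := by
  rw [← count_le2 k]
  apply Finset.card_bij (fun (v : Fin (5 * k)) _ => v.val)
  · intro a ha
    simp only [Finset.mem_filter, Finset.mem_univ, true_and] at ha
    simp only [Finset.mem_filter, Finset.mem_range]
    exact ⟨a.isLt, ha⟩
  · intro a _ b _ h
    exact Fin.ext h
  · intro b hb
    simp only [Finset.mem_filter, Finset.mem_range] at hb
    exact ⟨⟨b, hb.1⟩, by simp [hb.2], rfl⟩

lemma ncard_le2 : ({v : Fin (5 * k) | v.val % 5 ≤ 2} : Set (Fin (5 * k))).ncard = 3 * k := by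
  classical
  rw [Set.ncard_eq_toFinset_card', Set.toFinset_setOf]
  exact count_fin_le2

lemma sum_caps : (∑ v : Fin (5 * k), (if v.val % 5 ≤ 2 then 2 else 1)) = 8 * k := by
  classical
  rw [Finset.sum_ite, Finset.sum_const, Finset.sum_const]
  have h1 := count_fin_le2 (k := k)
  have h2 : ((Finset.univ : Finset (Fin (5 * k))).filter
      (fun v => ¬ v.val % 5 ≤ 2)).card = 5 * k - 3 * k := by
    have := Finset.card_filter_add_card_filter_not
      (s := (Finset.univ : Finset (Fin (5 * k)))) (p := fun v => v.val % 5 ≤ 2)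
    rw [Finset.card_univ, Fintype.card_fin] at this
    omega
  rw [h1, h2]
  simp only [smul_eq_mul]
  omega




instance : DecidableRel (PP k).Adj := fun u v => decidable_of_iff' _ PP_adj

lemma ncard_edge {V : Type*} [Fintype V] (G : SimpleGraph V) [Fintype G.edgeSet] :
    G.edgeSet.ncard = G.edgeFinset.card := by
  rw [← Nat.card_coe_set_eq, Nat.card_eq_fintype_card, ← Set.toFinset_card]
  rfl

lemma degree_eq_ncard {V : Type*} (G : SimpleGraph V) (v : V)
    [Fintype (G.neighborSet v)] : G.degree v = (G.neighborSet v).ncard := by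
  rw [← Nat.card_coe_set_eq, Nat.card_eq_fintype_card, G.card_neighborSet_eq_degree]

lemma nbrP0 (v : Fin (5 * k)) (h : v.val % 5 = 0) :
    (PP k).neighborFinset v = {⟨v.val + 1, by have := v.isLt; omega⟩,
      ⟨v.val + 2, by have := v.isLt; omega⟩} := by
  ext u
  have := v.isLt; have := u.isLt
  simp only [mem_neighborFinset, PP_adj, prel, Finset.mem_insert, Finset.mem_singleton,
    Fin.ext_iff, Fin.val_mk]
  omega

lemma nbrP1 (v : Fin (5 * k)) (h : v.val % 5 = 1) :
    (PP k).neighborFinset v = {⟨v.val - 1, by have := v.isLt; omega⟩,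
      ⟨v.val + 2, by have := v.isLt; omega⟩} := by
  ext u
  have := v.isLt; have := u.isLt
  simp only [mem_neighborFinset, PP_adj, prel, Finset.mem_insert, Finset.mem_singleton,
    Fin.ext_iff, Fin.val_mk]
  omega

lemma nbrP2 (v : Fin (5 * k)) (h : v.val % 5 = 2) :
    (PP k).neighborFinset v = {⟨v.val - 2, by have := v.isLt; omega⟩,
      ⟨v.val + 2, by have := v.isLt; omega⟩} := by
  ext u
  have := v.isLt; have := u.isLt
  simp only [mem_neighborFinset, PP_adj, prel, Finset.mem_insert, Finset.mem_singleton,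
    Fin.ext_iff, Fin.val_mk]
  omega

lemma nbrP34 (v : Fin (5 * k)) (h : 3 ≤ v.val % 5) :
    (PP k).neighborFinset v = {⟨v.val - 2, by have := v.isLt; omega⟩} := by
  ext u
  have := v.isLt; have := u.isLt
  simp only [mem_neighborFinset, PP_adj, prel, Finset.mem_singleton, Fin.ext_iff, Fin.val_mk]
  omega

lemma degP (v : Fin (5 * k)) : (PP k).degree v = if v.val % 5 ≤ 2 then 2 else 1 := by
  have hlt := v.isLt
  rcases (by omega : v.val % 5 = 0 ∨ v.val % 5 = 1 ∨ v.val % 5 = 2 ∨ 3 ≤ v.val % 5)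
    with h | h | h | h
  · rw [degree, nbrP0 v h, if_pos (by omega)]
    exact Finset.card_pair (Fin.ne_of_val_ne (show v.val + 1 ≠ v.val + 2 by omega))
  · rw [degree, nbrP1 v h, if_pos (by omega)]
    exact Finset.card_pair (Fin.ne_of_val_ne (show v.val - 1 ≠ v.val + 2 by omega))
  · rw [degree, nbrP2 v h, if_pos (by omega)]
    exact Finset.card_pair (Fin.ne_of_val_ne (show v.val - 2 ≠ v.val + 2 by omega))
  · rw [degree, nbrP34 v h, if_neg (by omega), Finset.card_singleton]

lemma PP_edge_ncard : (PP k).edgeSet.ncard = 4 * k := by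
  classical
  have hs := (PP k).sum_degrees_eq_twice_card_edges
  have h2 : (∑ v : Fin (5 * k), (PP k).degree v)
      = ∑ v : Fin (5 * k), (if v.val % 5 ≤ 2 then 2 else 1) :=
    Finset.sum_congr rfl (fun v _ => degP v)
  rw [h2, sum_caps] at hs
  rw [ncard_edge]
  omega

lemma GG_nbr_small (v : Fin (5 * k)) (h : ¬ v.val % 5 ≤ 2) :
    (GG k).neighborSet v ⊆ {(⟨v.val - 2, by have := v.isLt; omega⟩ : Fin (5 * k))} := by
  intro u hu
  rw [mem_neighborSet, GG_adj] at hu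
  have := v.isLt; have := u.isLt
  simp only [Set.mem_singleton_iff, Fin.ext_iff, Fin.val_mk]
  unfold grel at hu
  omega

lemma internal_sub (H : SimpleGraph (Fin (5 * k))) (hH : H ≤ GG k) :
    {v | 2 ≤ (H.neighborSet v).ncard} ⊆ {v : Fin (5 * k) | v.val % 5 ≤ 2} := by
  intro v hv
  simp only [Set.mem_setOf_eq] at hv ⊢
  by_contra h
  have hsub : H.neighborSet v ⊆ {(⟨v.val - 2, by have := v.isLt; omega⟩ : Fin (5 * k))} :=
    fun u hu => GG_nbr_small v h (by exact hH hu)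
  have := Set.ncard_le_ncard hsub (Set.toFinite _)
  rw [Set.ncard_singleton] at this
  omega

lemma internalCount_le (H : SimpleGraph (Fin (5 * k))) (hH : H ≤ GG k) :
    internalCount H ≤ 3 * k := by
  rw [internalCount, ← ncard_le2]
  exact Set.ncard_le_ncard (internal_sub H hH) (Set.toFinite _)

set_option maxHeartbeats 1000000 in
lemma TT_nbr_big (v : Fin (5 * k)) (h : v.val % 5 ≤ 2) :
    2 ≤ ((TT k).neighborSet v).ncard := by
  have hlt := v.isLt
  have key : ∀ a b : ℕ, ∀ (ha : a < 5 * k) (hb : b < 5 * k), a ≠ b →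
      (TT k).Adj v ⟨a, ha⟩ → (TT k).Adj v ⟨b, hb⟩ →
      2 ≤ ((TT k).neighborSet v).ncard := by
    intro a b ha hb hab hA hB
    have hsub : ({⟨a, ha⟩, ⟨b, hb⟩} : Set (Fin (5 * k))) ⊆ (TT k).neighborSet v := by
      rintro u (rfl | rfl)
      · exact hA
      · exact hB
    calc 2 = ({⟨a, ha⟩, ⟨b, hb⟩} : Set (Fin (5 * k))).ncard :=
            (Set.ncard_pair (Fin.ne_of_val_ne (show a ≠ b from hab))).symm
      _ ≤ _ := Set.ncard_le_ncard hsub (Set.toFinite _)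
  rcases (by omega : v.val % 5 = 0 ∨ v.val % 5 = 1 ∨ v.val % 5 = 2) with h5 | h5 | h5
  · exact key (v.val + 1) (v.val + 2) (by omega) (by omega) (by omega)
      (by rw [TT_adj]; simp only [prel, srel, Fin.val_mk]; omega)
      (by rw [TT_adj]; simp only [prel, srel, Fin.val_mk]; omega)
  · exact key (v.val - 1) (v.val + 2) (by omega) (by omega) (by omega)
      (by rw [TT_adj]; simp only [prel, srel, Fin.val_mk]; omega)
      (by rw [TT_adj]; simp only [prel, srel, Fin.val_mk]; omega)
  · exact key (v.val - 2) (v.val + 2) (by omega) (by omega) (by omega)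
      (by rw [TT_adj]; simp only [prel, srel, Fin.val_mk]; omega)
      (by rw [TT_adj]; simp only [prel, srel, Fin.val_mk]; omega)

lemma TT_internal : internalCount (TT k) = 3 * k := by
  rw [internalCount, ← ncard_le2]
  congr 1
  apply Set.Subset.antisymm (internal_sub _ TT_le_GG)
  intro v hv
  exact TT_nbr_big v hv

lemma Q_bound (Q : SimpleGraph (Fin (5 * k))) (hQG : Q ≤ GG k)
    (hdeg : ∀ v, (Q.neighborSet v).ncard ≤ 2) : Q.edgeSet.ncard ≤ 4 * k := by
  classical
  have hs := Q.sum_degrees_eq_twice_card_edges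
  have hb : ∀ v : Fin (5 * k), Q.degree v ≤ (if v.val % 5 ≤ 2 then 2 else 1) := by
    intro v
    rw [degree_eq_ncard]
    split_ifs with h
    · exact hdeg v
    · have hsub : Q.neighborSet v ⊆
          {(⟨v.val - 2, by have := v.isLt; omega⟩ : Fin (5 * k))} :=
        fun u hu => GG_nbr_small v h (by exact hQG hu)
      have := Set.ncard_le_ncard hsub (Set.toFinite _)
      rwa [Set.ncard_singleton] at this
  have hsum : (∑ v : Fin (5 * k), Q.degree v) ≤ 8 * k := by
    calc (∑ v : Fin (5 * k), Q.degree v)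
        ≤ ∑ v : Fin (5 * k), (if v.val % 5 ≤ 2 then 2 else 1) :=
          Finset.sum_le_sum (fun v _ => hb v)
      _ = 8 * k := sum_caps
  rw [ncard_edge]
  omega




lemma GG_adj_of {u v : Fin (5 * k)} (hne : u.val ≠ v.val)
    (h : grel u.val v.val ∨ grel v.val u.val) : (GG k).Adj u v := GG_adj.mpr ⟨hne, h⟩

lemma grel1 {u v : ℕ} (h : u / 5 = v / 5) (h2 : u % 5 = 0) (h3 : v % 5 = 1) : grel u v :=
  Or.inl ⟨h, Or.inl ⟨h2, h3⟩⟩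
lemma grel2 {u v : ℕ} (h : u / 5 = v / 5) (h2 : u % 5 = 0) (h3 : v % 5 = 2) : grel u v :=
  Or.inl ⟨h, Or.inr (Or.inl ⟨h2, h3⟩)⟩
lemma grel3 {u v : ℕ} (h : u / 5 = v / 5) (h2 : u % 5 = 1) (h3 : v % 5 = 2) : grel u v :=
  Or.inl ⟨h, Or.inr (Or.inr (Or.inl ⟨h2, h3⟩))⟩
lemma grel4 {u v : ℕ} (h : u / 5 = v / 5) (h2 : u % 5 = 1) (h3 : v % 5 = 3) : grel u v :=
  Or.inl ⟨h, Or.inr (Or.inr (Or.inr (Or.inl ⟨h2, h3⟩)))⟩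
lemma grel5 {u v : ℕ} (h : u / 5 = v / 5) (h2 : u % 5 = 2) (h3 : v % 5 = 4) : grel u v :=
  Or.inl ⟨h, Or.inr (Or.inr (Or.inr (Or.inr ⟨h2, h3⟩)))⟩
lemma grelS {u v : ℕ} (h2 : u % 5 = 0) (h3 : v % 5 = 0) (h : v / 5 = u / 5 + 1) : grel u v :=
  Or.inr ⟨h2, h3, h⟩

set_option maxHeartbeats 1000000 in
lemma block_clique (B : Set (Fin (5 * k))) (hconn : ((GG k).induce B).Connected)
    (hnocut : ∀ v, ¬ IsCutVertex ((GG k).induce B) v) :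
    ∀ u ∈ B, ∀ w ∈ B, u ≠ w → (GG k).Adj u w := by
  have pend : ∀ a b : Fin (5 * k), a ∈ B → b ∈ B → a ≠ b → ¬ (GG k).Adj a b →
      3 ≤ a.val % 5 → False := by
    intro a b ha hb hab hnadj h3
    have hlta := a.isLt; have hltb := b.isLt
    have hbz : b.val ≠ a.val - 2 := by
      intro hEq
      apply hnadj
      rcases (by omega : a.val % 5 = 3 ∨ a.val % 5 = 4) with h4 | h4
      · exact GG_adj_of (by omega) (Or.inr (grel4 (by omega) (by omega) (by omega)))
      · exact GG_adj_of (by omega) (Or.inr (grel5 (by omega) (by omega) (by omega)))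
    refine sep_contra hconn hnocut {t : Fin (5 * k) | t.val = a.val}
      ⟨a.val - 2, by omega⟩
      (by intro h; simp only [Set.mem_setOf_eq, Fin.val_mk] at h; omega)
      ?_ ha hb (by exact rfl)
      (by intro h; simp only [Set.mem_setOf_eq] at h; exact hab (Fin.ext h.symm))
      (by intro hEq; have := congrArg Fin.val hEq; simp only [Fin.val_mk] at this
          exact hbz this)
    intro s t hst hsS htS
    rw [GG_adj] at hst
    simp only [Set.mem_setOf_eq] at hsS htS
    unfold grel at hst
    refine Fin.ext ?_
    simp only [Fin.val_mk]
    omega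
  intro u hu w hw hne
  by_contra hadj
  have hltu := u.isLt; have hltw := w.isLt
  have hvne : u.val ≠ w.val := fun h => hne (Fin.ext h)
  by_cases hu3 : 3 ≤ u.val % 5
  · exact pend u w hu hw hne hadj hu3
  by_cases hw3 : 3 ≤ w.val % 5
  · exact pend w u hw hu hne.symm (fun h => hadj h.symm) hw3
  by_cases hg : u.val / 5 = w.val / 5
  · apply hadj
    rcases (by omega : (u.val % 5 = 0 ∧ w.val % 5 = 1) ∨ (u.val % 5 = 0 ∧ w.val % 5 = 2) ∨
        (u.val % 5 = 1 ∧ w.val % 5 = 2) ∨ (w.val % 5 = 0 ∧ u.val % 5 = 1) ∨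
        (w.val % 5 = 0 ∧ u.val % 5 = 2) ∨ (w.val % 5 = 1 ∧ u.val % 5 = 2))
      with h | h | h | h | h | h
    · exact GG_adj_of hvne (Or.inl (grel1 hg h.1 h.2))
    · exact GG_adj_of hvne (Or.inl (grel2 hg h.1 h.2))
    · exact GG_adj_of hvne (Or.inl (grel3 hg h.1 h.2))
    · exact GG_adj_of hvne (Or.inr (grel1 hg.symm h.1 h.2))
    · exact GG_adj_of hvne (Or.inr (grel2 hg.symm h.1 h.2))
    · exact GG_adj_of hvne (Or.inr (grel3 hg.symm h.1 h.2))
  by_cases hw0 : w.val % 5 = 0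
  · by_cases hu0 : u.val % 5 = 0
    · have hnc1 : w.val / 5 ≠ u.val / 5 + 1 := by
        intro h
        exact hadj (GG_adj_of hvne (Or.inl (grelS hu0 hw0 h)))
      have hnc2 : u.val / 5 ≠ w.val / 5 + 1 := by
        intro h
        exact hadj (GG_adj_of hvne (Or.inr (grelS hw0 hu0 h)))
      rcases lt_or_gt_of_ne hg with hlt | hlt
      · refine sep_contra hconn hnocut {t : Fin (5 * k) | t.val / 5 ≤ u.val / 5}
          ⟨5 * (u.val / 5 + 1), by omega⟩
          (by intro h; simp only [Set.mem_setOf_eq, Fin.val_mk] at h; omega)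
          ?_ hu hw (by show u.val / 5 ≤ u.val / 5; omega)
          (by intro h; simp only [Set.mem_setOf_eq] at h; omega)
          (by intro hEq; have := congrArg Fin.val hEq; simp only [Fin.val_mk] at this; omega)
        intro s t hst hsS htS
        rw [GG_adj] at hst
        simp only [Set.mem_setOf_eq, not_le] at hsS htS
        unfold grel at hst
        refine Fin.ext ?_
        simp only [Fin.val_mk]
        omega
      · refine sep_contra hconn hnocut {t : Fin (5 * k) | t.val / 5 ≤ w.val / 5}
          ⟨5 * (w.val / 5 + 1), by omega⟩
          (by intro h; simp only [Set.mem_setOf_eq, Fin.val_mk] at h; omega)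
          ?_ hw hu (by show w.val / 5 ≤ w.val / 5; omega)
          (by intro h; simp only [Set.mem_setOf_eq] at h; omega)
          (by intro hEq; have := congrArg Fin.val hEq; simp only [Fin.val_mk] at this; omega)
        intro s t hst hsS htS
        rw [GG_adj] at hst
        simp only [Set.mem_setOf_eq, not_le] at hsS htS
        unfold grel at hst
        refine Fin.ext ?_
        simp only [Fin.val_mk]
        omega
    · refine sep_contra hconn hnocut
        {t : Fin (5 * k) | t.val / 5 = u.val / 5 ∧ t.val % 5 ≠ 0}
        ⟨5 * (u.val / 5), by omega⟩
        (by intro h; simp only [Set.mem_setOf_eq, Fin.val_mk] at h; omega)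
        ?_ hu hw (by exact ⟨rfl, by omega⟩)
        (by intro h; simp only [Set.mem_setOf_eq] at h; exact hg h.1.symm)
        (by intro hEq; have := congrArg Fin.val hEq; simp only [Fin.val_mk] at this; omega)
      intro s t hst hsS htS
      rw [GG_adj] at hst
      simp only [Set.mem_setOf_eq, not_and, not_ne_iff] at hsS htS
      unfold grel at hst
      refine Fin.ext ?_
      simp only [Fin.val_mk]
      rcases hsS with ⟨hs1, hs2⟩
      by_cases ht5 : t.val / 5 = u.val / 5
      · have := htS ht5
        omega
      · omega
  · refine sep_contra hconn hnocut
      {t : Fin (5 * k) | t.val / 5 = w.val / 5 ∧ t.val % 5 ≠ 0}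
      ⟨5 * (w.val / 5), by omega⟩
      (by intro h; simp only [Set.mem_setOf_eq, Fin.val_mk] at h; omega)
      ?_ hw hu (by exact ⟨rfl, by omega⟩)
      (by intro h; simp only [Set.mem_setOf_eq] at h; exact hg h.1)
      (by intro hEq; have := congrArg Fin.val hEq; simp only [Fin.val_mk] at this; omega)
    intro s t hst hsS htS
    rw [GG_adj] at hst
    simp only [Set.mem_setOf_eq, not_and, not_ne_iff] at hsS htS
    unfold grel at hst
    refine Fin.ext ?_
    simp only [Fin.val_mk]
    rcases hsS with ⟨hs1, hs2⟩
    by_cases ht5 : t.val / 5 = w.val / 5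
    · have := htS ht5
      omega
    · omega

lemma GG_blockgraph : IsBlockGraph (GG k) :=
  fun B hB => block_clique B hB.2.1 hB.2.2.1




set_option maxHeartbeats 2000000 in
lemma GG_cactus : IsCactusGraph (GG k) := by
  intro B hB
  obtain ⟨⟨b0, hb0⟩, hconn, hnocut, -⟩ := hB
  have hcl := block_clique B hconn hnocut
  by_cases h1 : ∀ t ∈ B, t = b0
  · exfalso
    apply hnocut ⟨b0, hb0⟩
    intro hcon
    obtain ⟨⟨⟨t, ht⟩, htne⟩⟩ := hcon.nonempty
    exact htne (Subtype.ext (h1 t ht))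
  push_neg at h1
  obtain ⟨b1, hb1, hne1⟩ := h1
  by_cases h2 : ∀ t ∈ B, t = b0 ∨ t = b1
  · left
    refine ⟨b0, b1, Ne.symm hne1, ?_⟩
    ext t
    simp only [Set.mem_insert_iff, Set.mem_singleton_iff]
    constructor
    · exact fun ht => h2 t ht
    · rintro (rfl | rfl)
      · exact hb0
      · exact hb1
  push_neg at h2
  obtain ⟨b2, hb2, hne20, hne21⟩ := h2
  right
  have a01 : (GG k).Adj b0 b1 := hcl b0 hb0 b1 hb1 (Ne.symm hne1)
  have a02 : (GG k).Adj b0 b2 := hcl b0 hb0 b2 hb2 (Ne.symm hne20)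
  have a12 : (GG k).Adj b1 b2 := hcl b1 hb1 b2 hb2 (Ne.symm hne21)
  have t01 := GG_adj.mp a01
  have t02 := GG_adj.mp a02
  have t12 := GG_adj.mp a12
  have tri : b0.val / 5 = b1.val / 5 ∧ b1.val / 5 = b2.val / 5 ∧ b0.val % 5 ≤ 2 ∧
      b1.val % 5 ≤ 2 ∧ b2.val % 5 ≤ 2 ∧ b0.val % 5 ≠ b1.val % 5 ∧
      b0.val % 5 ≠ b2.val % 5 ∧ b1.val % 5 ≠ b2.val % 5 := by
    unfold grel at t01 t02 t12
    omega
  have htrip : ∀ t ∈ B, t = b0 ∨ t = b1 ∨ t = b2 := by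
    intro t ht
    by_contra hcon
    push_neg at hcon
    obtain ⟨hc0, hc1, hc2⟩ := hcon
    have e0 := GG_adj.mp (hcl t ht b0 hb0 hc0)
    have e1 := GG_adj.mp (hcl t ht b1 hb1 hc1)
    have e2 := GG_adj.mp (hcl t ht b2 hb2 hc2)
    unfold grel at e0 e1 e2
    omega
  intro v
  have hv3 := htrip v.val v.prop
  -- the neighbor set of v in the induced graph is the other two vertices
  have hne01 : b0 ≠ b1 := Ne.symm hne1
  have hne02 : b0 ≠ b2 := Ne.symm hne20
  have hne12 : b1 ≠ b2 := Ne.symm hne21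
  rcases hv3 with hv | hv | hv
  · have hset : ((GG k).induce B).neighborSet v = {⟨b1, hb1⟩, ⟨b2, hb2⟩} := by
      ext u
      simp only [mem_neighborSet, Set.mem_insert_iff, Set.mem_singleton_iff]
      constructor
      · intro hAdj
        rcases htrip u.val u.prop with hu | hu | hu
        · exact absurd (Subtype.ext (hv.trans hu.symm) : v = u) hAdj.ne
        · left; exact Subtype.ext hu
        · right; exact Subtype.ext hu
      · rintro (rfl | rfl)
        · have : (GG k).Adj v.val b1 := by rw [hv]; exact a01
          exact this
        · have : (GG k).Adj v.val b2 := by rw [hv]; exact a02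
          exact this
    rw [hset]
    exact Set.ncard_pair (by intro hEq; exact hne12 (congrArg Subtype.val hEq))
  · have hset : ((GG k).induce B).neighborSet v = {⟨b0, hb0⟩, ⟨b2, hb2⟩} := by
      ext u
      simp only [mem_neighborSet, Set.mem_insert_iff, Set.mem_singleton_iff]
      constructor
      · intro hAdj
        rcases htrip u.val u.prop with hu | hu | hu
        · left; exact Subtype.ext hu
        · exact absurd (Subtype.ext (hv.trans hu.symm) : v = u) hAdj.ne
        · right; exact Subtype.ext hu
      · rintro (rfl | rfl)
        · have : (GG k).Adj v.val b0 := by rw [hv]; exact a01.symm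
          exact this
        · have : (GG k).Adj v.val b2 := by rw [hv]; exact a12
          exact this
    rw [hset]
    exact Set.ncard_pair (by intro hEq; exact hne02 (congrArg Subtype.val hEq))
  · have hset : ((GG k).induce B).neighborSet v = {⟨b0, hb0⟩, ⟨b1, hb1⟩} := by
      ext u
      simp only [mem_neighborSet, Set.mem_insert_iff, Set.mem_singleton_iff]
      constructor
      · intro hAdj
        rcases htrip u.val u.prop with hu | hu | hu
        · left; exact Subtype.ext hu
        · right; exact Subtype.ext hu
        · exact absurd (Subtype.ext (hv.trans hu.symm) : v = u) hAdj.ne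
      · rintro (rfl | rfl)
        · have : (GG k).Adj v.val b0 := by rw [hv]; exact a02.symm
          exact this
        · have : (GG k).Adj v.val b1 := by rw [hv]; exact a12.symm
          exact this
    rw [hset]
    exact Set.ncard_pair (by intro hEq; exact hne01 (congrArg Subtype.val hEq))




lemma PP_cover_deg (v : Fin (5 * k)) : ((PP k).neighborSet v).ncard ≤ 2 := by
  rw [← degree_eq_ncard, degP]
  split_ifs <;> omega

lemma PP_opt (hk : 0 < k) : IsOptPathCoverOf (GG k) (PP k) := by
  refine ⟨⟨PP_le_GG, PP_acyclic hk, PP_cover_deg⟩, ?_⟩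
  rintro Q ⟨hQle, hQac, hQdeg⟩
  rw [PP_edge_ncard]
  exact Q_bound Q hQle hQdeg

lemma master (hk : 0 < k) :
    (GG k).Connected ∧ IsBlockGraph (GG k) ∧ IsCactusGraph (GG k) ∧
      IsOptPathCoverOf (GG k) (PP k) ∧ (PP k).edgeSet.ncard = 4 * k ∧
      IsSpanningTreeOf (GG k) (TT k) ∧ internalCount (TT k) = 3 * k ∧
      (∀ T, IsSpanningTreeOf (GG k) T → internalCount T ≤ 3 * k) := by
  refine ⟨(TT_connected hk).mono TT_le_GG, GG_blockgraph, GG_cactus, PP_opt hk,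
    PP_edge_ncard, ⟨TT_le_GG, TT_isTree hk⟩, TT_internal, ?_⟩
  rintro T ⟨hle, -⟩
  exact internalCount_le T hle


end Stmt10

theorem stmt10 :
    (∀ k : ℕ, 0 < k → ∃ G : SimpleGraph (Fin (5 * k)), G.Connected ∧
      IsBlockGraph G ∧ IsCactusGraph G ∧
      ∃ P : SimpleGraph (Fin (5 * k)), IsOptPathCoverOf G P ∧
        (∃ T, IsSpanningTreeOf G T ∧ internalCount T = P.edgeSet.ncard - k) ∧
        (∀ T, IsSpanningTreeOf G T → internalCount T ≤ P.edgeSet.ncard - k)) ∧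
    (∀ c : ℕ, ∃ (n : ℕ) (G : SimpleGraph (Fin n)) (P : SimpleGraph (Fin n)),
      G.Connected ∧ IsBlockGraph G ∧ IsCactusGraph G ∧ IsOptPathCoverOf G P ∧
      ∀ T, IsSpanningTreeOf G T → internalCount T + c < P.edgeSet.ncard) := by
  constructor
  · intro k hk
    obtain ⟨hconn, hbg, hcg, hopt, hcard, hst, hint, hbound⟩ := Stmt10.master hk
    refine ⟨Stmt10.GG k, hconn, hbg, hcg, Stmt10.PP k, hopt, ⟨Stmt10.TT k, hst, ?_⟩, ?_⟩
    · rw [hcard, hint]; omega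
    · intro T hT
      rw [hcard]
      have := hbound T hT
      omega
  · intro c
    obtain ⟨hconn, hbg, hcg, hopt, hcard, hst, hint, hbound⟩ :=
      Stmt10.master (k := c + 1) (by omega)
    refine ⟨5 * (c + 1), Stmt10.GG (c + 1), Stmt10.PP (c + 1), hconn, hbg, hcg, hopt, ?_⟩
    intro T hT
    have := hbound T hT
    rw [hcard]
    omega
end

section
/- Let G be a connected graph that admits a path cover P* = {P_1, ..., P_k} with k ≥ 2 such that there exists a vertex u on P_1 that is not an endpoint of P_1 and u is adjacent in G to an endpoint v_i of each P_i for 2 ≤ i ≤ k. Then G has a spanning tree with at least |E(P*)| - 1 internal vertices. Consequently, if P* is an optimal path cover, Opt(G) = |E(P*)| - 1. -/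
open SimpleGraph

section Aux
open Finset
set_option linter.unusedSectionVars false
variable {V : Type*} {ι : Type*}

lemma IsAcyclic.anti {F Q : SimpleGraph V} (h : Q ≤ F) (hF : F.IsAcyclic) : Q.IsAcyclic := by
  intro v c hc
  exact hF (c.mapLe h) (hc.mapLe h)

lemma reachable_sup_edge {F : SimpleGraph V} {a b x y : V}
    (h : (F ⊔ edge a b).Reachable x y) :
    F.Reachable x y ∨ (F.Reachable x a ∧ F.Reachable b y) ∨ (F.Reachable x b ∧ F.Reachable a y) := by
  obtain ⟨w⟩ := h
  induction w with
  | nil => exact Or.inl (Reachable.refl _)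
  | cons hadj p ih =>
    rename_i s t r
    rcases (sup_adj _ _ _ _).1 hadj with hF | he
    · rcases ih with h1 | ⟨h1, h2⟩ | ⟨h1, h2⟩
      · exact Or.inl (hF.reachable.trans h1)
      · exact Or.inr (Or.inl ⟨hF.reachable.trans h1, h2⟩)
      · exact Or.inr (Or.inr ⟨hF.reachable.trans h1, h2⟩)
    · rw [edge_adj] at he
      rcases he.1 with ⟨rfl, rfl⟩ | ⟨rfl, rfl⟩
      · rcases ih with h1 | ⟨h1, h2⟩ | ⟨h1, h2⟩
        · exact Or.inr (Or.inl ⟨Reachable.refl _, h1⟩)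
        · exact Or.inl (h1.symm.trans h2)
        · exact Or.inl h2
      · rcases ih with h1 | ⟨h1, h2⟩ | ⟨h1, h2⟩
        · exact Or.inr (Or.inr ⟨Reachable.refl _, h1⟩)
        · exact Or.inl h2
        · exact Or.inl (h1.symm.trans h2)

lemma isAcyclic_sup_edge {F : SimpleGraph V} {a b : V} (hF : F.IsAcyclic)
    (hr : ¬ F.Reachable a b) : (F ⊔ edge a b).IsAcyclic := by
  classical
  have hab : a ≠ b := fun h => hr (h ▸ Reachable.refl a)
  intro v c hc
  by_cases he : s(a, b) ∈ c.edges
  · have := (adj_and_reachable_delete_edges_iff_exists_cycle (G := F ⊔ edge a b) (v := a) (w := b)).2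
      ⟨v, c, hc, he⟩
    refine hr (this.2.mono ?_)
    intro x y hxy
    rcases hxy with ⟨hxy1, hxy2⟩
    rcases (sup_adj _ _ _ _).1 hxy1 with h | h
    · exact h
    · exfalso
      rw [edge_adj] at h
      apply hxy2
      rw [fromEdgeSet_adj]
      rcases h.1 with ⟨rfl, rfl⟩ | ⟨rfl, rfl⟩
      · exact ⟨rfl, h.2⟩
      · exact ⟨Sym2.eq_swap ▸ rfl, h.2⟩
  · -- transfer to F
    have hsub : ∀ e ∈ c.edges, e ∈ F.edgeSet := by
      intro e hmem
      have := c.edges_subset_edgeSet hmem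
      rw [edgeSet_sup] at this
      rcases this with h | h
      · exact h
      · exfalso
        rw [edge_edgeSet_of_ne hab] at h
        exact he (h ▸ hmem)
    exact hF (c.transfer F hsub) (hc.transfer hsub)

noncomputable def excess [Fintype V] (F : SimpleGraph V) : ℕ :=
  ∑ v, ((F.neighborSet v).ncard - 2)

lemma ncard_neighborSet_eq_degree_s11 [Fintype V] (F : SimpleGraph V) [DecidableRel F.Adj] (v : V) :
    (F.neighborSet v).ncard = F.degree v := by
  rw [Set.ncard_eq_toFinset_card', Set.toFinset_card, F.card_neighborSet_eq_degree]

lemma sum_ncard_neighborSet [Fintype V] (F : SimpleGraph V) :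
    ∑ v, (F.neighborSet v).ncard = 2 * F.edgeSet.ncard := by
  classical
  have h1 : ∀ v, (F.neighborSet v).ncard = F.degree v := ncard_neighborSet_eq_degree_s11 F
  simp only [h1]
  rw [F.sum_degrees_eq_twice_card_edges]
  congr 1
  rw [Set.ncard_eq_toFinset_card']
  congr 1

lemma one_le_degree_of_connected [Fintype V] {T : SimpleGraph V} (hT : T.Connected)
    (hcard : 2 ≤ Fintype.card V) (v : V) : 1 ≤ (T.neighborSet v).ncard := by
  have : Nontrivial V := Fintype.one_lt_card_iff_nontrivial.1 hcard
  obtain ⟨w, hw⟩ := exists_ne v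
  obtain ⟨p⟩ := hT.preconnected v w
  cases p with
  | nil => exact absurd rfl hw.symm
  | cons hadj q =>
    exact (Set.ncard_pos (Set.toFinite _)).2 ⟨_, hadj⟩

lemma tree_identity [Fintype V] {T : SimpleGraph V} (hT : T.IsTree)
    (hcard : 2 ≤ Fintype.card V) :
    internalCount T + 1 + excess T = T.edgeSet.ncard := by
  classical
  set d : V → ℕ := fun v => (T.neighborSet v).ncard with hd
  have hd1 : ∀ v, 1 ≤ d v := fun v => one_le_degree_of_connected hT.isConnected hcard v
  have hsum : ∑ v, d v = 2 * T.edgeSet.ncard := sum_ncard_neighborSet T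
  have hminsum : ∑ v, min (d v) 2 + excess T = ∑ v, d v := by
    rw [excess, ← Finset.sum_add_distrib]
    exact Finset.sum_congr rfl fun v _ => by simp only [hd]; omega
  have hI : internalCount T = (Finset.univ.filter (fun v => 2 ≤ d v)).card := by
    rw [internalCount, Set.ncard_eq_toFinset_card']
    congr 1
    ext v
    simp [hd]
  have hmin2 : ∑ v, min (d v) 2 = Fintype.card V + internalCount T := by
    have : ∀ v ∈ Finset.univ, min (d v) 2 = 1 + (if 2 ≤ d v then 1 else 0) := by
      intro v _
      have := hd1 v
      split <;> omega
    rw [Finset.sum_congr rfl this, Finset.sum_add_distrib]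
    simp [hI, Finset.sum_ite_eq, Finset.sum_boole, hd]
  have hE : T.edgeSet.ncard + 1 = Fintype.card V := by
    rw [Set.ncard_eq_toFinset_card']
    have := hT.card_edgeFinset
    rwa [edgeFinset] at this
  omega

section Del
variable [Fintype V] {F : SimpleGraph V} {a b : V}

lemma edge_symm' (s t : V) : edge s t = edge t s := by
  unfold edge
  congr 1
  rw [Sym2.eq_swap]

omit [Fintype V] in
lemma neighborSet_sdiff_edge_left (hab : F.Adj a b) :
    (F \ edge a b).neighborSet a = F.neighborSet a \ {b} := by
  ext y
  simp only [mem_neighborSet, sdiff_adj, Set.mem_diff, Set.mem_singleton_iff]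
  constructor
  · rintro ⟨h1, h2⟩
    refine ⟨h1, fun hyb => h2 ?_⟩
    subst hyb
    rw [edge_adj]
    exact ⟨Or.inl ⟨rfl, rfl⟩, h1.ne⟩
  · rintro ⟨h1, h2⟩
    refine ⟨h1, fun hc => ?_⟩
    rw [edge_adj] at hc
    rcases hc.1 with ⟨-, rfl⟩ | ⟨rfl, rfl⟩
    · exact h2 rfl
    · exact hc.2 rfl

omit [Fintype V] in
lemma neighborSet_sdiff_edge_of_ne {x : V} (hxa : x ≠ a) (hxb : x ≠ b) :
    (F \ edge a b).neighborSet x = F.neighborSet x := by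
  ext y
  simp only [mem_neighborSet, sdiff_adj]
  constructor
  · exact fun h => h.1
  · intro h
    refine ⟨h, fun hc => ?_⟩
    rw [edge_adj] at hc
    rcases hc.1 with ⟨rfl, rfl⟩ | ⟨rfl, rfl⟩
    · exact hxa rfl
    · exact hxb rfl

omit [Fintype V] in
lemma edgeSet_sdiff_edge (hab : a ≠ b) :
    (F \ edge a b).edgeSet = F.edgeSet \ {s(a, b)} := by
  rw [edgeSet_sdiff, edge_edgeSet_of_ne hab]

end Del

lemma exists_maxdeg_two [Fintype V] :
    ∀ (n : ℕ) (F : SimpleGraph V), excess F ≤ n →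
    ∃ Q, Q ≤ F ∧ (∀ v, (Q.neighborSet v).ncard ≤ 2) ∧
      F.edgeSet.ncard ≤ Q.edgeSet.ncard + excess F := by
  intro n
  induction n with
  | zero =>
    intro F hF
    refine ⟨F, le_refl F, fun v => ?_, Nat.le_add_right _ _⟩
    have h0 : excess F = 0 := Nat.le_zero.1 hF
    have := (Finset.sum_eq_zero_iff).1 h0 v (Finset.mem_univ v)
    omega
  | succ n ih =>
    intro F hF
    by_cases hdeg : ∀ v, (F.neighborSet v).ncard ≤ 2
    · exact ⟨F, le_refl F, hdeg, Nat.le_add_right _ _⟩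
    · push_neg at hdeg
      obtain ⟨v, hv⟩ := hdeg
      have hv3 : 3 ≤ (F.neighborSet v).ncard := hv
      obtain ⟨w, hw⟩ := (Set.ncard_pos (Set.toFinite _)).1 (by omega : 0 < (F.neighborSet v).ncard)
      have hA : F.Adj v w := hw
      have hne : v ≠ w := hA.ne
      set F' := F \ edge v w with hF'
      have hdv : ((F').neighborSet v).ncard = (F.neighborSet v).ncard - 1 := by
        rw [hF', neighborSet_sdiff_edge_left hA, Set.ncard_diff_singleton_of_mem hw]
      have hdw : ((F').neighborSet w).ncard = (F.neighborSet w).ncard - 1 := by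
        have heq : (F \ edge v w) = (F \ edge w v) := by rw [edge_symm']
        rw [hF', heq, neighborSet_sdiff_edge_left hA.symm,
          Set.ncard_diff_singleton_of_mem (by exact hA.symm)]
      have hdx : ∀ x, x ≠ v → x ≠ w → ((F').neighborSet x).ncard = (F.neighborSet x).ncard := by
        intro x h1 h2
        rw [hF', neighborSet_sdiff_edge_of_ne h1 h2]
      have hwv1 : 1 ≤ (F.neighborSet w).ncard :=
        (Set.ncard_pos (Set.toFinite _)).2 ⟨v, hA.symm⟩
      have hexc : excess F' + 1 ≤ excess F := by
        have hlt : excess F' < excess F := by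
          apply Finset.sum_lt_sum
          · intro x _
            by_cases h1 : x = v
            · subst h1; omega
            · by_cases h2 : x = w
              · subst h2; omega
              · rw [hdx x h1 h2]
          · exact ⟨v, Finset.mem_univ v, by omega⟩
        omega
      have hmem : s(v, w) ∈ F.edgeSet := hA
      have hE : F.edgeSet.ncard = F'.edgeSet.ncard + 1 := by
        rw [hF', edgeSet_sdiff_edge hne, Set.ncard_diff_singleton_of_mem hmem]
        have : 1 ≤ F.edgeSet.ncard := (Set.ncard_pos (Set.toFinite _)).2 ⟨_, hmem⟩
        omega
      obtain ⟨Q, hQ1, hQ2, hQ3⟩ := ih F' (by omega)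
      exact ⟨Q, le_trans hQ1 sdiff_le, hQ2, by omega⟩


/-- add edges from `u` to `f i` for `i` in `l`. -/
def addE (P : SimpleGraph V) (u : V) (f : ι → V) (l : List ι) : SimpleGraph V :=
  l.foldr (fun i F => F ⊔ edge u (f i)) P

@[simp] lemma addE_nil (P : SimpleGraph V) (u : V) (f : ι → V) : addE P u f [] = P := rfl

@[simp] lemma addE_cons (P : SimpleGraph V) (u : V) (f : ι → V) (a : ι) (l : List ι) :
    addE P u f (a :: l) = addE P u f l ⊔ edge u (f a) := rfl

lemma adj_addE {P : SimpleGraph V} {u : V} {f : ι → V} (hne : ∀ i, u ≠ f i) (l : List ι)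
    {x y : V} : (addE P u f l).Adj x y ↔
      P.Adj x y ∨ ∃ i ∈ l, (x = u ∧ y = f i) ∨ (x = f i ∧ y = u) := by
  induction l with
  | nil => simp
  | cons a l ih =>
    simp only [addE_cons, sup_adj, ih, edge_adj, List.mem_cons]
    constructor
    · rintro ((h | ⟨i, hi, h⟩) | ⟨h, -⟩)
      · exact Or.inl h
      · exact Or.inr ⟨i, Or.inr hi, h⟩
      · exact Or.inr ⟨a, Or.inl rfl, h⟩
    · rintro (h | ⟨i, (rfl | hi), h⟩)
      · exact Or.inl (Or.inl h)
      · refine Or.inr ⟨?_, ?_⟩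
        · exact h
        · rcases h with ⟨rfl, rfl⟩ | ⟨rfl, rfl⟩
          · exact hne i
          · exact (hne i).symm
      · exact Or.inl (Or.inr ⟨i, hi, h⟩)

section Reach
variable {P : SimpleGraph V} {u : V} {f : ι → V}
  (hfu : ∀ i, ¬ P.Reachable u (f i))
  (hfinj : ∀ i j, P.Reachable (f i) (f j) → i = j)

include hfu in
lemma hne_of_hfu (i : ι) : u ≠ f i := fun h => hfu i (h ▸ Reachable.refl u)

include hfu in
lemma reach_addE (l : List ι) : ∀ x y : V,
    (addE P u f l).Reachable x y ↔ P.Reachable x y ∨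
      ((P.Reachable x u ∨ ∃ i ∈ l, P.Reachable x (f i)) ∧
       (P.Reachable y u ∨ ∃ i ∈ l, P.Reachable y (f i))) := by
  induction l with
  | nil =>
    intro x y
    simp only [addE_nil, List.not_mem_nil, false_and, exists_false, or_false]
    constructor
    · exact fun h => Or.inl h
    · rintro (h | ⟨h1, h2⟩)
      · exact h
      · exact h1.trans h2.symm
  | cons a l ih =>
    intro x y
    constructor
    · intro h
      rcases reachable_sup_edge (h : (addE P u f l ⊔ edge u (f a)).Reachable x y) with
        h | ⟨h1, h2⟩ | ⟨h1, h2⟩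
      · rcases (ih x y).1 h with h | ⟨h1, h2⟩
        · exact Or.inl h
        · refine Or.inr ⟨?_, ?_⟩
          · rcases h1 with h1 | ⟨i, hi, h1⟩
            · exact Or.inl h1
            · exact Or.inr ⟨i, List.mem_cons_of_mem _ hi, h1⟩
          · rcases h2 with h2 | ⟨i, hi, h2⟩
            · exact Or.inl h2
            · exact Or.inr ⟨i, List.mem_cons_of_mem _ hi, h2⟩
      · -- x reaches u, (f a) reaches y in addE l
        refine Or.inr ⟨?_, ?_⟩
        · rcases (ih x u).1 h1 with h | ⟨hx, -⟩
          · exact Or.inl h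
          · rcases hx with hx | ⟨i, hi, hx⟩
            · exact Or.inl hx
            · exact Or.inr ⟨i, List.mem_cons_of_mem _ hi, hx⟩
        · rcases (ih (f a) y).1 h2 with h | ⟨-, hy⟩
          · exact Or.inr ⟨a, List.mem_cons_self, h.symm⟩
          · rcases hy with hy | ⟨i, hi, hy⟩
            · exact Or.inl hy
            · exact Or.inr ⟨i, List.mem_cons_of_mem _ hi, hy⟩
      · -- x reaches (f a), u reaches y
        refine Or.inr ⟨?_, ?_⟩
        · rcases (ih x (f a)).1 h1 with h | ⟨hx, -⟩
          · exact Or.inr ⟨a, List.mem_cons_self, h⟩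
          · rcases hx with hx | ⟨i, hi, hx⟩
            · exact Or.inl hx
            · exact Or.inr ⟨i, List.mem_cons_of_mem _ hi, hx⟩
        · rcases (ih u y).1 h2 with h | ⟨-, hy⟩
          · exact Or.inl h.symm
          · rcases hy with hy | ⟨i, hi, hy⟩
            · exact Or.inl hy
            · exact Or.inr ⟨i, List.mem_cons_of_mem _ hi, hy⟩
    · -- backward
      have hle : P ≤ addE P u f (a :: l) := by
        intro x y h
        rw [adj_addE (hne_of_hfu hfu)]
        exact Or.inl h
      have hadj : ∀ i ∈ (a :: l), (addE P u f (a :: l)).Adj u (f i) := by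
        intro i hi
        rw [adj_addE (hne_of_hfu hfu)]
        exact Or.inr ⟨i, hi, Or.inl ⟨rfl, rfl⟩⟩
      have hreachu : ∀ z, (P.Reachable z u ∨ ∃ i ∈ (a :: l), P.Reachable z (f i)) →
          (addE P u f (a :: l)).Reachable z u := by
        rintro z (h | ⟨i, hi, h⟩)
        · exact h.mono hle
        · exact (h.mono hle).trans ((hadj i hi).reachable).symm
      rintro (h | ⟨h1, h2⟩)
      · exact h.mono hle
      · exact (hreachu x h1).trans (hreachu y h2).symm

include hfu hfinj in
lemma acyclic_addE (hP : P.IsAcyclic) (l : List ι) (hl : l.Nodup) :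
    (addE P u f l).IsAcyclic := by
  induction l with
  | nil => exact hP
  | cons a l ih =>
    rw [List.nodup_cons] at hl
    rw [addE_cons]
    refine isAcyclic_sup_edge (ih hl.2) ?_
    rw [reach_addE hfu l u (f a)]
    rintro (h | ⟨-, h2⟩)
    · exact hfu a h
    · rcases h2 with h2 | ⟨i, hi, h2⟩
      · exact hfu a h2.symm
      · exact hl.1 ((hfinj i a h2.symm) ▸ hi)

include hfu hfinj in
lemma ncard_edgeSet_addE [Fintype V] (l : List ι) (hl : l.Nodup) :
    (addE P u f l).edgeSet.ncard = P.edgeSet.ncard + l.length := by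
  induction l with
  | nil => simp
  | cons a l ih =>
    rw [List.nodup_cons] at hl
    have hnadj : ¬ (addE P u f l).Adj u (f a) := by
      rw [adj_addE (hne_of_hfu hfu)]
      rintro (h | ⟨i, hi, ⟨-, h2⟩ | ⟨h1, -⟩⟩)
      · exact hfu a h.reachable
      · exact hl.1 ((hfinj a i (h2 ▸ Reachable.refl _)) ▸ hi)
      · exact hfu i (h1 ▸ Reachable.refl _)
    have hne : u ≠ f a := hne_of_hfu hfu a
    rw [addE_cons, edgeSet_sup, edge_edgeSet_of_ne hne]
    rw [Set.union_singleton, Set.ncard_insert_of_notMem (by rwa [mem_edgeSet]) (Set.toFinite _),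
      ih hl.2, List.length_cons]
    omega

end Reach

end Aux

theorem stmt11 {V : Type*} [Fintype V] (G : SimpleGraph V) (hG : G.Connected)
    (P : SimpleGraph V) (hP : IsPathCoverOf G P)
    (hk : 2 ≤ Nat.card P.ConnectedComponent)
    (u : V) (hu : (P.neighborSet u).ncard = 2)
    (hadj : ∀ C : P.ConnectedComponent, C ≠ P.connectedComponentMk u →
      ∃ v, P.connectedComponentMk v = C ∧ (P.neighborSet v).ncard ≤ 1 ∧ G.Adj u v) :
    (∃ T, IsSpanningTreeOf G T ∧ P.edgeSet.ncard - 1 ≤ internalCount T) ∧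
    (IsOptPathCoverOf G P →
      (∃ T, IsSpanningTreeOf G T ∧ internalCount T = P.edgeSet.ncard - 1) ∧
      (∀ T, IsSpanningTreeOf G T → internalCount T ≤ P.edgeSet.ncard - 1)) := by
  classical
  obtain ⟨hPG, hPac, hPdeg⟩ := hP
  have hsurj : Function.Surjective P.connectedComponentMk := fun C => Quot.exists_rep C
  have hcard2 : 2 ≤ Fintype.card V := by
    have h1 : Nat.card P.ConnectedComponent ≤ Nat.card V := Nat.card_le_card_of_surjective _ hsurj
    have h2 : Nat.card V = Fintype.card V := Nat.card_eq_fintype_card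
    omega
  haveI : Finite P.ConnectedComponent := Finite.of_surjective _ hsurj
  haveI : Fintype {C : P.ConnectedComponent // C ≠ P.connectedComponentMk u} := Fintype.ofFinite _
  choose g hg1 hg2 hg3 using
    fun C : {C : P.ConnectedComponent // C ≠ P.connectedComponentMk u} => hadj C.1 C.2
  have hfu : ∀ i, ¬ P.Reachable u (g i) := by
    intro i h
    exact i.2 ((hg1 i) ▸ (ConnectedComponent.sound h.symm))
  have hfinj : ∀ i j, P.Reachable (g i) (g j) → i = j := by
    intro i j h
    have := ConnectedComponent.sound h
    rw [hg1 i, hg1 j] at this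
    exact Subtype.ext this
  have hne : ∀ i, u ≠ g i := hne_of_hfu hfu
  set l := (Finset.univ : Finset {C : P.ConnectedComponent // C ≠ P.connectedComponentMk u}).toList
    with hl
  have hlnd : l.Nodup := Finset.nodup_toList _
  have hlmem : ∀ i, i ∈ l := fun i => by rw [hl, Finset.mem_toList]; exact Finset.mem_univ i
  set T := addE P u g l with hT
  -- T ≤ G
  have hTG : T ≤ G := by
    intro x y h
    rw [hT, adj_addE hne] at h
    rcases h with h | ⟨i, -, ⟨rfl, rfl⟩ | ⟨rfl, rfl⟩⟩
    · exact hPG h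
    · exact hg3 i
    · exact (hg3 i).symm
  -- reach everything
  have hInS : ∀ z : V, P.Reachable z u ∨ ∃ i ∈ l, P.Reachable z (g i) := by
    intro z
    by_cases hz : P.connectedComponentMk z = P.connectedComponentMk u
    · exact Or.inl (ConnectedComponent.exact hz)
    · refine Or.inr ⟨⟨P.connectedComponentMk z, hz⟩, hlmem _, ?_⟩
      exact (ConnectedComponent.exact (hg1 ⟨P.connectedComponentMk z, hz⟩)).symm
  have hTconn : T.Connected := by
    rw [connected_iff]
    refine ⟨fun x y => ?_, ⟨u⟩⟩
    rw [hT, reach_addE hfu l x y]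
    exact Or.inr ⟨hInS x, hInS y⟩
  have hTtree : T.IsTree := ⟨hTconn, acyclic_addE hfu hfinj hPac l hlnd⟩
  -- edge count
  have hE : T.edgeSet.ncard = P.edgeSet.ncard + l.length :=
    ncard_edgeSet_addE hfu hfinj l hlnd
  -- degrees
  have hPadju : ∀ i, ¬ P.Adj u (g i) := fun i h => hfu i h.reachable
  have hginj : Function.Injective g := fun i j h => hfinj i j (h ▸ Reachable.refl _)
  have hNu : T.neighborSet u = P.neighborSet u ∪ Set.range g := by
    ext y
    rw [Set.mem_union, mem_neighborSet, hT, adj_addE hne]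
    constructor
    · rintro (h | ⟨i, -, ⟨-, rfl⟩ | ⟨h1, -⟩⟩)
      · exact Or.inl h
      · exact Or.inr ⟨i, rfl⟩
      · exact absurd h1 (hne i)
    · rintro (h | ⟨i, rfl⟩)
      · exact Or.inl h
      · exact Or.inr ⟨i, hlmem i, Or.inl ⟨rfl, rfl⟩⟩
  have hdu : (T.neighborSet u).ncard =
      2 + Fintype.card {C : P.ConnectedComponent // C ≠ P.connectedComponentMk u} := by
    rw [hNu, Set.ncard_union_eq ?dis (Set.toFinite _) (Set.toFinite _), hu]
    case dis =>
      rw [Set.disjoint_left]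
      rintro y hy ⟨i, rfl⟩
      exact hPadju i hy
    rw [← Set.image_univ, Set.ncard_image_of_injective _ hginj, Set.ncard_univ,
      Nat.card_eq_fintype_card]
  have hdeg_other : ∀ v, v ≠ u → (T.neighborSet v).ncard ≤ 2 := by
    intro v hv
    by_cases hvr : ∃ i, v = g i
    · obtain ⟨i, rfl⟩ := hvr
      have hNg : T.neighborSet (g i) ⊆ P.neighborSet (g i) ∪ {u} := by
        intro y hy
        rw [mem_neighborSet, hT, adj_addE hne] at hy
        rcases hy with h | ⟨j, -, ⟨h1, -⟩ | ⟨-, rfl⟩⟩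
        · exact Or.inl h
        · exact absurd h1.symm (hne i)
        · exact Or.inr rfl
      calc (T.neighborSet (g i)).ncard ≤ (P.neighborSet (g i) ∪ {u}).ncard :=
            Set.ncard_le_ncard hNg (Set.toFinite _)
        _ ≤ (P.neighborSet (g i)).ncard + ({u} : Set V).ncard := Set.ncard_union_le _ _
        _ ≤ 2 := by rw [Set.ncard_singleton]; have := hg2 i; omega
    · have hNv : T.neighborSet v = P.neighborSet v := by
        ext y
        rw [mem_neighborSet, mem_neighborSet, hT, adj_addE hne]
        constructor
        · rintro (h | ⟨j, -, ⟨rfl, -⟩ | ⟨h1, -⟩⟩)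
          · exact h
          · exact absurd rfl hv
          · exact absurd ⟨j, h1⟩ hvr
        · exact fun h => Or.inl h
      rw [hNv]
      exact hPdeg v
  have hexc : excess T = Fintype.card {C : P.ConnectedComponent // C ≠ P.connectedComponentMk u} := by
    rw [excess, Finset.sum_eq_single u]
    · rw [hdu]; omega
    · intro v _ hv
      have := hdeg_other v hv
      omega
    · intro h
      exact absurd (Finset.mem_univ u) h
  have hlen : l.length = Fintype.card {C : P.ConnectedComponent // C ≠ P.connectedComponentMk u} := by
    rw [hl, Finset.length_toList, Finset.card_univ]
  have hid := tree_identity hTtree hcard2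
  have hint : internalCount T = P.edgeSet.ncard - 1 ∧ internalCount T + 1 = P.edgeSet.ncard := by
    rw [hE, hlen, hexc] at hid
    omega
  refine ⟨⟨T, ⟨hTG, hTtree⟩, by omega⟩, fun hopt => ⟨⟨T, ⟨hTG, hTtree⟩, hint.1⟩, ?_⟩⟩
  intro T' hT'
  obtain ⟨hT'G, hT'tree⟩ := hT'
  obtain ⟨Q, hQle, hQdeg, hQcard⟩ := exists_maxdeg_two (excess T') T' le_rfl
  have hQpc : IsPathCoverOf G Q := ⟨le_trans hQle hT'G, IsAcyclic.anti hQle hT'tree.IsAcyclic, hQdeg⟩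
  have h1 := hopt.2 Q hQpc
  have h2 := tree_identity hT'tree hcard2
  omega
end

section
/- For a connected cograph G with at least 2 vertices, Opt(G) = |E(P*)| - 1, where P* is an optimal path cover of G and Opt(G) is the maximum number of internal vertices over all spanning trees of G. -/
open SimpleGraph

/-- A cograph: a graph with no induced path on four vertices. -/
def IsCograph {V : Type*} (G : SimpleGraph V) : Prop :=
  ¬ ∃ a b c d : V, a ≠ b ∧ a ≠ c ∧ a ≠ d ∧ b ≠ c ∧ b ≠ d ∧ c ≠ d ∧
    G.Adj a b ∧ G.Adj b c ∧ G.Adj c d ∧ ¬ G.Adj a c ∧ ¬ G.Adj a d ∧ ¬ G.Adj b d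

set_option linter.unusedSectionVars false
set_option linter.unusedVariables false
set_option maxHeartbeats 1600000

open Finset

section AuxHelpers
variable {V : Type*}

lemma ncard_nbr [Fintype V] (G : SimpleGraph V) [DecidableRel G.Adj] (v : V) :
    (G.neighborSet v).ncard = G.degree v := by
  rw [← SimpleGraph.card_neighborSet_eq_degree, ← Nat.card_coe_set_eq,
    Nat.card_eq_fintype_card]

lemma ncard_edge [Fintype V] [DecidableEq V] (G : SimpleGraph V) [DecidableRel G.Adj] :
    G.edgeSet.ncard = G.edgeFinset.card := by
  rw [SimpleGraph.edgeFinset_card, ← Nat.card_coe_set_eq, Nat.card_eq_fintype_card]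

lemma isAcyclic_mono {G H : SimpleGraph V} (h : H ≤ G) (hG : G.IsAcyclic) : H.IsAcyclic := by
  intro v c hc
  exact hG (c.transfer G (fun e he => (SimpleGraph.edgeSet_mono h) (c.edges_subset_edgeSet he)))
    (hc.transfer _)

lemma deg_pos [Fintype V] {G : SimpleGraph V} [DecidableRel G.Adj] (hc : G.Connected)
    (h2 : 2 ≤ Fintype.card V) (v : V) : 0 < G.degree v := by
  rw [SimpleGraph.degree_pos_iff_exists_adj]
  have : Nontrivial V := Fintype.one_lt_card_iff_nontrivial.1 h2
  obtain ⟨w, hw⟩ := exists_ne v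
  obtain ⟨p⟩ := hc.preconnected v w
  cases p with
  | nil => exact absurd rfl hw
  | cons h _ => exact ⟨_, h⟩

lemma deg_le_le [Fintype V] {G H : SimpleGraph V} [DecidableRel G.Adj] [DecidableRel H.Adj]
    (h : H ≤ G) (v : V) : H.degree v ≤ G.degree v := by
  apply Finset.card_le_card
  intro w hw
  rw [SimpleGraph.mem_neighborFinset] at hw ⊢
  exact h hw

end AuxHelpers

section AuxCount
variable {V : Type*} [Fintype V] [DecidableEq V]

lemma internal_eq (T : SimpleGraph V) [DecidableRel T.Adj] :
    internalCount T = (univ.filter (fun v => 2 ≤ T.degree v)).card := by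
  have h1 : {v | 2 ≤ (T.neighborSet v).ncard} = {v | 2 ≤ T.degree v} := by
    ext v; simp [ncard_nbr]
  rw [internalCount, h1, Set.ncard_eq_toFinset_card', Set.toFinset_setOf]

lemma filter_not_two (T : SimpleGraph V) [DecidableRel T.Adj] (hpos : ∀ v, 0 < T.degree v) :
    (univ.filter (fun v => ¬ 2 ≤ T.degree v)) = univ.filter (fun v => T.degree v = 1) := by
  apply Finset.filter_congr
  intro v _
  have := hpos v
  constructor
  · intro h; omega
  · intro h; omega

lemma card_split (T : SimpleGraph V) [DecidableRel T.Adj] (hpos : ∀ v, 0 < T.degree v) :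
    (univ.filter (fun v => 2 ≤ T.degree v)).card
      + (univ.filter (fun v => T.degree v = 1)).card = Fintype.card V := by
  have h2 := Finset.card_filter_add_card_filter_not (s := univ)
    (p := fun v => 2 ≤ T.degree v)
  rw [filter_not_two T hpos, Finset.card_univ] at h2
  exact h2

lemma sum_split (T : SimpleGraph V) [DecidableRel T.Adj] (hpos : ∀ v, 0 < T.degree v) :
    ((univ.filter (fun v => 2 ≤ T.degree v)).sum (fun v => T.degree v))
      + (univ.filter (fun v => T.degree v = 1)).card = 2 * T.edgeFinset.card := by
  have h1 := Finset.sum_filter_add_sum_filter_not univ (fun v => 2 ≤ T.degree v)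
    (fun v => T.degree v)
  rw [filter_not_two T hpos] at h1
  have h2 : (univ.filter (fun v => T.degree v = 1)).sum (fun v => T.degree v)
      = (univ.filter (fun v => T.degree v = 1)).card := by
    rw [Finset.card_eq_sum_ones]
    apply Finset.sum_congr rfl
    intro v hv
    simp only [Finset.mem_filter] at hv
    omega
  rw [h2] at h1
  rw [h1, SimpleGraph.sum_degrees_eq_twice_card_edges]

lemma sum_sub2 (T : SimpleGraph V) [DecidableRel T.Adj] :
    ((univ.filter (fun v => 2 ≤ T.degree v)).sum (fun v => T.degree v))
      = ((univ.filter (fun v => 2 ≤ T.degree v)).sum (fun v => T.degree v - 2))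
        + 2 * (univ.filter (fun v => 2 ≤ T.degree v)).card := by
  rw [Finset.card_eq_sum_ones, Finset.mul_sum, ← Finset.sum_add_distrib]
  apply Finset.sum_congr rfl
  intro v hv
  simp only [Finset.mem_filter] at hv
  omega

end AuxCount

section AuxEdge
variable {V : Type*}

lemma sup_edge_sdiff (P : SimpleGraph V) {u v : V} (h : ¬P.Adj u v) :
    (P ⊔ fromEdgeSet {s(u,v)}) \ fromEdgeSet {s(u,v)} = P := by
  ext a b
  simp only [sdiff_adj, sup_adj, fromEdgeSet_adj, Set.mem_singleton_iff]
  constructor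
  · rintro ⟨hab | ⟨he, hne⟩, hn⟩
    · exact hab
    · exact absurd ⟨he, hne⟩ hn
  · intro hab
    refine ⟨Or.inl hab, ?_⟩
    rintro ⟨he, hne⟩
    rw [Sym2.eq_iff] at he
    rcases he with ⟨rfl, rfl⟩ | ⟨rfl, rfl⟩
    · exact h hab
    · exact h hab.symm

lemma acyclic_sup_edge {P : SimpleGraph V} {u v : V} (hac : P.IsAcyclic)
    (h : ¬P.Reachable u v) : (P ⊔ fromEdgeSet {s(u,v)}).IsAcyclic := by
  have hPadj : ¬P.Adj u v := fun ha => h ha.reachable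
  intro w c hc
  by_cases he : s(u,v) ∈ c.edges
  · have h2 := (adj_and_reachable_delete_edges_iff_exists_cycle
      (G := P ⊔ fromEdgeSet {s(u,v)}) (v := u) (w := v)).mpr ⟨w, c, hc, he⟩
    rw [SimpleGraph.deleteEdges, sup_edge_sdiff P hPadj] at h2
    exact h h2.2
  · have hsub : ∀ e ∈ c.edges, e ∈ P.edgeSet := by
      intro e hee
      have := c.edges_subset_edgeSet hee
      rw [edgeSet_sup, edgeSet_fromEdgeSet] at this
      rcases this with h1 | h2
      · exact h1
      · rw [Set.mem_diff, Set.mem_singleton_iff] at h2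
        exact absurd (h2.1 ▸ hee) he
    exact hac (c.transfer P hsub) (hc.transfer _)

lemma nbr_sup (P Q : SimpleGraph V) (w : V) :
    (P ⊔ Q).neighborSet w = P.neighborSet w ∪ Q.neighborSet w := by
  ext x; simp [mem_neighborSet, sup_adj]

lemma nbr_edge [DecidableEq V] {u v : V} (hne : u ≠ v) (w : V) :
    (fromEdgeSet {s(u,v)} : SimpleGraph V).neighborSet w
      = if w = u then {v} else if w = v then {u} else ∅ := by
  ext x
  simp only [mem_neighborSet, fromEdgeSet_adj, Set.mem_singleton_iff]
  rw [Sym2.eq_iff]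
  split_ifs with h1 h2 <;>
    simp only [Set.mem_singleton_iff, Set.mem_empty_iff_false, iff_false] <;> aesop

end AuxEdge

section AuxPath
variable {V : Type*}

lemma edges_start_unique {P : SimpleGraph V} {w y : V} (p : P.Walk w y) (hp : p.IsPath)
    (x1 x2 : V) (h1 : s(w,x1) ∈ p.edges) (h2 : s(w,x2) ∈ p.edges) : x1 = x2 := by
  induction p with
  | nil => simp at h1
  | @cons a b c h q ih =>
    rw [SimpleGraph.Walk.cons_isPath_iff] at hp
    have key : ∀ x, s(a, x) ∈ (SimpleGraph.Walk.cons h q).edges → x = b := by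
      intro x hx
      rw [SimpleGraph.Walk.edges_cons, List.mem_cons] at hx
      rcases hx with hx | hx
      · rw [Sym2.eq_iff] at hx
        rcases hx with ⟨-, rfl⟩ | ⟨rfl, rfl⟩
        · rfl
        · exact absurd h (SimpleGraph.irrefl P)
      · exact absurd (SimpleGraph.Walk.fst_mem_support_of_mem_edges q hx) hp.2
    rw [key x1 h1, key x2 h2]

lemma exists_lowdeg [Fintype V] {P : SimpleGraph V} [DecidableRel P.Adj] (hac : P.IsAcyclic)
    (v : V) : ∃ w, P.Reachable v w ∧ P.degree w ≤ 1 := by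
  classical
  have aux : ∀ (k : ℕ) (w : V) (p : P.Walk v w), p.IsPath →
      Fintype.card V ≤ p.length + k → ∃ w', P.Reachable v w' ∧ P.degree w' ≤ 1 := by
    intro k
    induction k with
    | zero =>
      intro w p hp hlen
      have := hp.length_lt
      omega
    | succ k ih =>
      intro w p hp hlen
      by_cases hd : P.degree w ≤ 1
      · exact ⟨w, ⟨p⟩, hd⟩
      · push_neg at hd
        have h2 : 1 < #(P.neighborFinset w) := by
          rwa [SimpleGraph.card_neighborFinset_eq_degree]
        obtain ⟨x₁, hx₁, x₂, hx₂, hne12⟩ := Finset.one_lt_card.mp h2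
        rw [SimpleGraph.mem_neighborFinset] at hx₁ hx₂
        by_cases hout : ∃ x, P.Adj w x ∧ x ∉ p.support
        · obtain ⟨x, hadj, hxs⟩ := hout
          have hp' : (p.concat hadj).IsPath := by
            rw [← SimpleGraph.Walk.isPath_reverse_iff, SimpleGraph.Walk.reverse_concat,
              SimpleGraph.Walk.cons_isPath_iff]
            exact ⟨hp.reverse, by rwa [SimpleGraph.Walk.support_reverse, List.mem_reverse]⟩
          exact ih x (p.concat hadj) hp' (by rw [SimpleGraph.Walk.length_concat]; omega)
        · push_neg at hout
          exfalso
          -- all neighbors of w are on p; at most one x has s(w,x) ∈ p.edges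
          have hone : s(w, x₁) ∉ p.edges ∨ s(w, x₂) ∉ p.edges := by
            by_contra hb
            push_neg at hb
            have e1 : s(w, x₁) ∈ p.reverse.edges := by
              rw [SimpleGraph.Walk.edges_reverse, List.mem_reverse]; exact hb.1
            have e2 : s(w, x₂) ∈ p.reverse.edges := by
              rw [SimpleGraph.Walk.edges_reverse, List.mem_reverse]; exact hb.2
            exact hne12 (edges_start_unique p.reverse hp.reverse x₁ x₂ e1 e2)
          have hpick : ∃ x, P.Adj w x ∧ s(w, x) ∉ p.edges := by
            rcases hone with h | h
            · exact ⟨x₁, hx₁, h⟩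
            · exact ⟨x₂, hx₂, h⟩
          obtain ⟨x, hadj, hnedge⟩ := hpick
          have hxs : x ∈ p.support := hout x hadj
          set q := p.dropUntil x hxs with hq
          have hqpath : q.IsPath := hp.dropUntil hxs
          have hqe : s(w, x) ∉ q.edges := by
            intro hh
            exact hnedge (SimpleGraph.Walk.edges_dropUntil_subset p hxs hh)
          have hcyc : (SimpleGraph.Walk.cons hadj q).IsCycle := by
            rw [SimpleGraph.Walk.cons_isCycle_iff]
            exact ⟨hqpath, hqe⟩
          exact hac _ hcyc
  exact aux (Fintype.card V) v SimpleGraph.Walk.nil (by simp) (by simp)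

lemma pathcover_aug [Fintype V] {G P : SimpleGraph V} (hP : IsOptPathCoverOf G P)
    {u v : V} (hu : (P.neighborSet u).ncard ≤ 1) (hv : (P.neighborSet v).ncard ≤ 1)
    (hr : ¬P.Reachable u v) : ¬G.Adj u v := by
  classical
  intro hadj
  have hne : u ≠ v := fun h => hr (h ▸ SimpleGraph.Reachable.refl u)
  set Q := P ⊔ fromEdgeSet {s(u,v)} with hQ
  have hQG : Q ≤ G := by
    apply sup_le hP.1.1
    intro a b hab
    rw [fromEdgeSet_adj, Set.mem_singleton_iff, Sym2.eq_iff] at hab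
    rcases hab.1 with ⟨rfl, rfl⟩ | ⟨rfl, rfl⟩
    · exact hadj
    · exact hadj.symm
  have hdeg : ∀ w, (Q.neighborSet w).ncard ≤ 2 := by
    intro w
    rw [hQ, nbr_sup, nbr_edge hne]
    split_ifs with h1 h2
    · subst h1
      calc (P.neighborSet w ∪ {v}).ncard ≤ (P.neighborSet w).ncard + ({v} : Set V).ncard :=
            Set.ncard_union_le _ _
        _ ≤ 2 := by rw [Set.ncard_singleton]; omega
    · subst h2
      calc (P.neighborSet w ∪ {u}).ncard ≤ (P.neighborSet w).ncard + ({u} : Set V).ncard :=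
            Set.ncard_union_le _ _
        _ ≤ 2 := by rw [Set.ncard_singleton]; omega
    · rw [Set.union_empty]
      exact hP.1.2.2 w
  have hcov : IsPathCoverOf G Q := ⟨hQG, acyclic_sup_edge hP.1.2.1 hr, hdeg⟩
  have hEQ : Q.edgeSet = insert s(u,v) P.edgeSet := by
    rw [hQ, edgeSet_sup, edgeSet_fromEdgeSet]
    have : ({s(u,v)} : Set (Sym2 V)) \ {e | e.IsDiag} = {s(u,v)} := by
      ext e
      simp only [Set.mem_diff, Set.mem_singleton_iff, Set.mem_setOf_eq]
      constructor
      · exact fun h => h.1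
      · rintro rfl
        exact ⟨rfl, by simp [Sym2.isDiag_iff_proj_eq, hne]⟩
    rw [Sym2.diagSet_eq_setOfPred_isDiag, this, Set.union_comm, Set.singleton_union]
  have hnot : s(u,v) ∉ P.edgeSet := by
    rw [SimpleGraph.mem_edgeSet]
    intro h
    exact hr h.reachable
  have hcard : Q.edgeSet.ncard = P.edgeSet.ncard + 1 := by
    rw [hEQ, Set.ncard_insert_of_notMem hnot (Set.toFinite _)]
  have := hP.2 Q hcov
  omega

end AuxPath

section Sein
variable {V : Type*} [DecidableEq V]

/-- `S` splits into two nonempty parts with no `G`-edges between them. -/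
def HasSplit (G : SimpleGraph V) (S : Finset V) : Prop :=
  ∃ C D : Finset V, C.Nonempty ∧ D.Nonempty ∧ Disjoint C D ∧ C ∪ D = S ∧
    ∀ c ∈ C, ∀ d ∈ D, ¬G.Adj c d

lemma cograph_compl {G : SimpleGraph V} (h : IsCograph G) : IsCograph Gᶜ := by
  rintro ⟨a, b, c, d, hab, hac, had, hbc, hbd, hcd, e1, e2, e3, n1, n2, n3⟩
  rw [compl_adj] at e1 e2 e3
  have m1 : G.Adj a c := by
    by_contra hx; exact n1 ⟨hac, hx⟩
  have m2 : G.Adj a d := by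
    by_contra hx; exact n2 ⟨had, hx⟩
  have m3 : G.Adj b d := by
    by_contra hx; exact n3 ⟨hbd, hx⟩
  -- induced P4 in G : b - d - a - c
  exact h ⟨b, d, a, c, hbd, hab.symm, hbc, had.symm, hcd.symm, hac,
    m3, m2.symm, m1, fun hh => e1.2 hh.symm, e2.2, fun hh => e3.2 hh.symm⟩

lemma sein_step {G : SimpleGraph V} (hco : IsCograph G) (x : V) (S' : Finset V)
    (hx : x ∉ S') (h : HasSplit Gᶜ S') :
    HasSplit G (insert x S') ∨ HasSplit Gᶜ (insert x S') := by
  classical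
  obtain ⟨C, D, hCne, hDne, hdisj, hunion, hcross⟩ := h
  have hCS : ∀ a ∈ C, a ∈ S' := fun a ha => hunion ▸ Finset.mem_union_left _ ha
  have hDS : ∀ a ∈ D, a ∈ S' := fun a ha => hunion ▸ Finset.mem_union_right _ ha
  -- cross pairs are G-adjacent
  have hadjCD : ∀ c ∈ C, ∀ d ∈ D, G.Adj c d := by
    intro c hc d hd
    have hne : c ≠ d := fun h => (Finset.disjoint_left.mp hdisj hc) (h ▸ hd)
    have := hcross c hc d hd
    rw [compl_adj] at this
    push_neg at this
    exact this hne
  have hxC : x ∉ C := fun h => hx (hCS x h)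
  have hxD : x ∉ D := fun h => hx (hDS x h)
  by_cases h1 : ∀ d ∈ D, G.Adj x d
  · right
    refine ⟨insert x C, D, ⟨x, Finset.mem_insert_self _ _⟩, hDne, ?_, ?_, ?_⟩
    · rw [Finset.disjoint_left]
      intro a ha hb
      rcases Finset.mem_insert.mp ha with rfl | ha'
      · exact hxD hb
      · exact Finset.disjoint_left.mp hdisj ha' hb
    · rw [Finset.insert_union, hunion]
    · intro c hc d hd
      rcases Finset.mem_insert.mp hc with rfl | hc'
      · intro hcon; rw [compl_adj] at hcon; exact hcon.2 (h1 d hd)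
      · exact hcross c hc' d hd
  by_cases h2 : ∀ c ∈ C, G.Adj x c
  · right
    refine ⟨C, insert x D, hCne, ⟨x, Finset.mem_insert_self _ _⟩, ?_, ?_, ?_⟩
    · rw [Finset.disjoint_right]
      intro a ha hb
      rcases Finset.mem_insert.mp ha with rfl | ha'
      · exact hxC hb
      · exact Finset.disjoint_right.mp hdisj ha' hb
    · rw [Finset.union_insert, hunion]
    · intro c hc d hd
      rcases Finset.mem_insert.mp hd with rfl | hd'
      · intro hcon; rw [compl_adj] at hcon; exact hcon.2 (h2 c hc).symm
      · exact hcross c hc d hd'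
  push_neg at h1 h2
  obtain ⟨d₀, hd₀D, hd₀⟩ := h1
  obtain ⟨c₀, hc₀C, hc₀⟩ := h2
  by_cases h3 : ∀ b ∈ S', ¬G.Adj x b
  · left
    refine ⟨{x}, S', ⟨x, Finset.mem_singleton_self _⟩, hCne.mono (fun a ha => hCS a ha), ?_, ?_, ?_⟩
    · rw [Finset.disjoint_left]
      intro a ha hb
      rw [Finset.mem_singleton] at ha
      exact hx (ha ▸ hb)
    · rw [← Finset.insert_eq]
    · intro c hc d hd
      rw [Finset.mem_singleton] at hc
      subst hc
      exact h3 d hd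
  · push_neg at h3
    right
    set N := S'.filter (fun b => G.Adj x b) with hN
    set M := S'.filter (fun b => ¬G.Adj x b) with hM
    obtain ⟨b₀, hb₀S, hb₀⟩ := h3
    have hNne : N.Nonempty := ⟨b₀, Finset.mem_filter.mpr ⟨hb₀S, hb₀⟩⟩
    refine ⟨N, insert x M, hNne, ⟨x, Finset.mem_insert_self _ _⟩, ?_, ?_, ?_⟩
    · rw [Finset.disjoint_left]
      intro a ha hb
      have haS : a ∈ S' := (Finset.mem_filter.mp ha).1
      rcases Finset.mem_insert.mp hb with rfl | hb'
      · exact hx haS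
      · exact (Finset.mem_filter.mp hb').2 (Finset.mem_filter.mp ha).2
    · rw [Finset.union_insert, hN, hM, Finset.filter_union_filter_not_eq]
    · -- the P4 argument
      intro a haN m hm
      have haS : a ∈ S' := (Finset.mem_filter.mp haN).1
      have haAdj : G.Adj x a := (Finset.mem_filter.mp haN).2
      rcases Finset.mem_insert.mp hm with rfl | hmM
      · -- m = x
        intro hcon
        rw [compl_adj] at hcon
        exact hcon.2 haAdj.symm
      · have hmS : m ∈ S' := (Finset.mem_filter.mp hmM).1
        have hmAdj : ¬G.Adj x m := (Finset.mem_filter.mp hmM).2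
        intro hcon
        rw [compl_adj] at hcon
        obtain ⟨hanem, hnadj⟩ := hcon
        -- a and m are non-adjacent, both in S'; derive P4
        have ham : ¬G.Adj a m := hnadj
        have hxa : x ≠ a := fun h => hx (h ▸ haS)
        have hxm : x ≠ m := fun h => hx (h ▸ hmS)
        -- cases on where a and m live
        have haCD : a ∈ C ∨ a ∈ D := by
          have : a ∈ C ∪ D := hunion ▸ haS
          exact Finset.mem_union.mp this
        have hmCD : m ∈ C ∨ m ∈ D := by
          have : m ∈ C ∪ D := hunion ▸ hmS
          exact Finset.mem_union.mp this
        rcases haCD with haC | haD <;> rcases hmCD with hmC | hmD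
        · -- both in C : P4 = (x, a, d₀, m)
          have e2 : G.Adj a d₀ := hadjCD a haC d₀ hd₀D
          have e3 : G.Adj d₀ m := (hadjCD m hmC d₀ hd₀D).symm
          have had' : a ≠ d₀ := e2.ne
          have hxd : x ≠ d₀ := fun h => hx (h ▸ hDS d₀ hd₀D)
          have hdm : d₀ ≠ m := e3.ne
          exact hco ⟨x, a, d₀, m, hxa, hxd, hxm, had', hanem, hdm,
            haAdj, e2, e3, hd₀, hmAdj, ham⟩
        · -- a ∈ C, m ∈ D : cross, adjacent, contradiction
          exact ham (hadjCD a haC m hmD)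
        · exact ham (hadjCD m hmC a haD).symm
        · -- both in D : P4 = (x, a, c₀, m)
          have e2 : G.Adj a c₀ := (hadjCD c₀ hc₀C a haD).symm
          have e3 : G.Adj c₀ m := hadjCD c₀ hc₀C m hmD
          have hxc : x ≠ c₀ := fun h => hx (h ▸ hCS c₀ hc₀C)
          exact hco ⟨x, a, c₀, m, hxa, hxc, hxm, e2.ne, hanem, e3.ne,
            haAdj, e2, e3, hc₀, hmAdj, ham⟩
end Sein

lemma sein_main {V : Type*} [DecidableEq V] {G : SimpleGraph V} (hco : IsCograph G)
    (S : Finset V) : 2 ≤ S.card → HasSplit G S ∨ HasSplit Gᶜ S := by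
  classical
  induction S using Finset.strongInduction with
  | _ S ih =>
    intro h2
    by_cases hc : S.card = 2
    · obtain ⟨u, v, huv, rfl⟩ := Finset.card_eq_two.mp hc
      by_cases hadj : G.Adj u v
      · right
        refine ⟨{u}, {v}, ⟨u, Finset.mem_singleton_self _⟩, ⟨v, Finset.mem_singleton_self _⟩,
          Finset.disjoint_singleton.mpr huv, by rw [← Finset.insert_eq], ?_⟩
        intro c hcm d hdm
        rw [Finset.mem_singleton] at hcm hdm
        subst hcm; subst hdm
        rw [compl_adj]; push_neg; intro; exact hadj
      · left
        refine ⟨{u}, {v}, ⟨u, Finset.mem_singleton_self _⟩, ⟨v, Finset.mem_singleton_self _⟩,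
          Finset.disjoint_singleton.mpr huv, by rw [← Finset.insert_eq], ?_⟩
        intro c hcm d hdm
        rw [Finset.mem_singleton] at hcm hdm
        subst hcm; subst hdm
        exact hadj
    · obtain ⟨x, hxS⟩ : S.Nonempty := Finset.card_pos.mp (by omega)
      have hcard' : (S.erase x).card + 1 = S.card := Finset.card_erase_add_one hxS
      have h2' : 2 ≤ (S.erase x).card := by omega
      have hins : insert x (S.erase x) = S := Finset.insert_erase hxS
      rcases ih (S.erase x) (Finset.erase_ssubset hxS) h2' with hG | hGc
      · have hG' : HasSplit Gᶜᶜ (S.erase x) := by rwa [compl_compl]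
        have hstep := sein_step (cograph_compl hco) x (S.erase x) (Finset.notMem_erase x S) hG'
        rw [compl_compl, hins] at hstep
        exact hstep.symm
      · have hstep := sein_step hco x (S.erase x) (Finset.notMem_erase x S) hGc
        rw [hins] at hstep
        exact hstep

lemma sein_join {V : Type*} [Fintype V] [DecidableEq V] {G : SimpleGraph V} (hG : G.Connected)
    (h2 : 2 ≤ Fintype.card V) (hco : IsCograph G) :
    ∃ A B : Finset V, A.Nonempty ∧ B.Nonempty ∧ Disjoint A B ∧
      A ∪ B = univ ∧ ∀ a ∈ A, ∀ b ∈ B, G.Adj a b := by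
  have hmain := sein_main hco univ (by rw [Finset.card_univ]; exact h2)
  rcases hmain with h | h
  · exfalso
    obtain ⟨C, D, hCne, hDne, hdisj, hunion, hcross⟩ := h
    obtain ⟨c₀, hc₀⟩ := hCne
    obtain ⟨d₀, hd₀⟩ := hDne
    obtain ⟨p⟩ := hG.preconnected c₀ d₀
    have hstay : ∀ (a b : V) (q : G.Walk a b), a ∈ C → b ∈ C := by
      intro a b q
      induction q with
      | nil => exact id
      | @cons u v w h q ih =>
        intro hu
        apply ih
        have hv : v ∈ C ∪ D := hunion ▸ Finset.mem_univ v
        rcases Finset.mem_union.mp hv with hv | hv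
        · exact hv
        · exact absurd h (hcross u hu v hv)
    exact Finset.disjoint_left.mp hdisj (hstay c₀ d₀ p hc₀) hd₀
  · obtain ⟨C, D, hCne, hDne, hdisj, hunion, hcross⟩ := h
    refine ⟨C, D, hCne, hDne, hdisj, hunion, ?_⟩
    intro a ha b hb
    have hne : a ≠ b := fun h => Finset.disjoint_left.mp hdisj ha (h ▸ hb)
    have := hcross a ha b hb
    rw [compl_adj] at this
    push_neg at this
    exact this hne

section PartA
variable {V : Type*}

lemma partA [Fintype V] {G T P : SimpleGraph V} (h2 : 2 ≤ Fintype.card V)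
    (hTG : T ≤ G) (hTree : T.IsTree) (hP : IsOptPathCoverOf G P) :
    internalCount T ≤ P.edgeSet.ncard - 1 := by
  classical
  have hNV : Nonempty V := Fintype.card_pos_iff.mp (by omega)
  -- maximal bounded-degree subgraph of T
  set S : Set (SimpleGraph V) := {F | F ≤ T ∧ ∀ v, (F.neighborSet v).ncard ≤ 2} with hS
  have hSne : S.Nonempty := ⟨⊥, bot_le, fun v => by
    have : (⊥ : SimpleGraph V).neighborSet v = ∅ := by ext; simp
    rw [this]; simp⟩
  obtain ⟨F, hFS, hFmax⟩ := Set.Finite.exists_maximalFor (fun F => F.edgeSet.ncard) S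
    (Set.toFinite S) hSne
  obtain ⟨hFT, hFdeg⟩ := hFS
  -- maximality consequence
  have key : ∀ u v : V, T.Adj u v → ¬F.Adj u v →
      (F.neighborSet u).ncard = 2 ∨ (F.neighborSet v).ncard = 2 := by
    intro u v hTuv hFuv
    by_contra hcon
    push_neg at hcon
    have hu : (F.neighborSet u).ncard ≤ 1 := by have := hFdeg u; omega
    have hv : (F.neighborSet v).ncard ≤ 1 := by have := hFdeg v; omega
    have hne : u ≠ v := hTuv.ne
    set F' := F ⊔ fromEdgeSet {s(u,v)} with hF'
    have hF'T : F' ≤ T := by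
      apply sup_le hFT
      intro a b hab
      rw [fromEdgeSet_adj, Set.mem_singleton_iff, Sym2.eq_iff] at hab
      rcases hab.1 with ⟨rfl, rfl⟩ | ⟨rfl, rfl⟩
      · exact hTuv
      · exact hTuv.symm
    have hF'deg : ∀ w, (F'.neighborSet w).ncard ≤ 2 := by
      intro w
      rw [hF', nbr_sup, nbr_edge hne]
      split_ifs with hh1 hh2
      · subst hh1
        calc (F.neighborSet w ∪ {v}).ncard ≤ (F.neighborSet w).ncard + ({v} : Set V).ncard :=
              Set.ncard_union_le _ _
          _ ≤ 2 := by rw [Set.ncard_singleton]; omega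
      · subst hh2
        calc (F.neighborSet w ∪ {u}).ncard ≤ (F.neighborSet w).ncard + ({u} : Set V).ncard :=
              Set.ncard_union_le _ _
          _ ≤ 2 := by rw [Set.ncard_singleton]; omega
      · rw [Set.union_empty]; exact hFdeg w
    have hnot : s(u,v) ∉ F.edgeSet := by rw [SimpleGraph.mem_edgeSet]; exact hFuv
    have hEQ : F'.edgeSet = insert s(u,v) F.edgeSet := by
      rw [hF', edgeSet_sup, edgeSet_fromEdgeSet]
      have hd : ({s(u,v)} : Set (Sym2 V)) \ {e | e.IsDiag} = {s(u,v)} := by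
        ext e
        simp only [Set.mem_diff, Set.mem_singleton_iff, Set.mem_setOf_eq]
        constructor
        · exact fun h => h.1
        · rintro rfl
          exact ⟨rfl, by simp [Sym2.isDiag_iff_proj_eq, hne]⟩
      rw [Sym2.diagSet_eq_setOfPred_isDiag, hd, Set.union_comm, Set.singleton_union]
    have hcard : F'.edgeSet.ncard = F.edgeSet.ncard + 1 := by
      rw [hEQ, Set.ncard_insert_of_notMem hnot (Set.toFinite _)]
    have : F'.edgeSet.ncard ≤ F.edgeSet.ncard :=
      hFmax (show F' ∈ S from ⟨hF'T, hF'deg⟩) (show F.edgeSet.ncard ≤ F'.edgeSet.ncard by omega)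
    omega
  -- counting
  have hpos : ∀ v, 0 < T.degree v := deg_pos hTree.isConnected h2
  set n := Fintype.card V with hn
  set Big := univ.filter (fun v => 2 ≤ T.degree v) with hBig
  set L1 := univ.filter (fun v => T.degree v = 1) with hL1
  set B2 := univ.filter (fun v => F.degree v = 2) with hB2
  set R := T.edgeFinset \ F.edgeFinset with hR
  have hcover : ∀ e ∈ R, ∃ x, x ∈ e ∧ F.degree x = 2 := by
    intro e he
    revert he
    refine Sym2.ind (fun u v he => ?_) e
    rw [hR, Finset.mem_sdiff, SimpleGraph.mem_edgeFinset, SimpleGraph.mem_edgeFinset,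
      SimpleGraph.mem_edgeSet, SimpleGraph.mem_edgeSet] at he
    rcases key u v he.1 he.2 with h | h
    · exact ⟨u, by simp, by rw [← ncard_nbr]; exact h⟩
    · exact ⟨v, by simp [Sym2.mem_iff], by rw [← ncard_nbr]; exact h⟩
  have hchoice : ∀ e : Sym2 V, ∃ x, e ∈ R → x ∈ e ∧ F.degree x = 2 := by
    intro e
    by_cases he : e ∈ R
    · obtain ⟨x, hx⟩ := hcover e he
      exact ⟨x, fun _ => hx⟩
    · exact ⟨Classical.arbitrary V, fun h => absurd h he⟩
  choose g hgspec using hchoice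
  have hfiber : R.card = ∑ v ∈ B2, (R.filter fun e => g e = v).card := by
    apply Finset.card_eq_sum_card_fiberwise
    intro e he
    rw [Finset.mem_coe, hB2, Finset.mem_filter]
    exact ⟨Finset.mem_univ _, (hgspec e he).2⟩
  have hfibbound : ∀ v ∈ B2, (R.filter fun e => g e = v).card ≤ T.degree v - 2 := by
    intro v hv
    rw [hB2, Finset.mem_filter] at hv
    have hsub : R.filter (fun e => g e = v) ⊆ T.incidenceFinset v \ F.incidenceFinset v := by
      intro e he
      rw [Finset.mem_filter] at he
      obtain ⟨heR, hev⟩ := he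
      have hmem := (hgspec e heR).1
      rw [hev] at hmem
      rw [hR, Finset.mem_sdiff] at heR
      rw [Finset.mem_sdiff, SimpleGraph.mem_incidenceFinset, SimpleGraph.mem_incidenceFinset]
      constructor
      · exact ⟨SimpleGraph.mem_edgeFinset.mp heR.1, hmem⟩
      · intro hctr
        exact heR.2 (SimpleGraph.mem_edgeFinset.mpr hctr.1)
    have hinc : F.incidenceFinset v ⊆ T.incidenceFinset v := by
      intro e he
      rw [SimpleGraph.mem_incidenceFinset] at he ⊢
      exact ⟨SimpleGraph.edgeSet_mono hFT he.1, he.2⟩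
    calc (R.filter fun e => g e = v).card
        ≤ (T.incidenceFinset v \ F.incidenceFinset v).card := Finset.card_le_card hsub
      _ = T.degree v - F.degree v := by
          rw [Finset.card_sdiff_of_subset hinc, SimpleGraph.card_incidenceFinset_eq_degree,
            SimpleGraph.card_incidenceFinset_eq_degree]
      _ = T.degree v - 2 := by rw [hv.2]
  have hB2Big : B2 ⊆ Big := by
    intro v hv
    rw [hB2, Finset.mem_filter] at hv
    rw [hBig, Finset.mem_filter]
    refine ⟨Finset.mem_univ _, ?_⟩
    have := deg_le_le hFT v
    omega
  have hRX : R.card ≤ Big.sum (fun v => T.degree v - 2) := by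
    calc R.card = ∑ v ∈ B2, (R.filter fun e => g e = v).card := hfiber
      _ ≤ ∑ v ∈ B2, (T.degree v - 2) := Finset.sum_le_sum hfibbound
      _ ≤ Big.sum (fun v => T.degree v - 2) := Finset.sum_le_sum_of_subset hB2Big
  have hsplit := card_split T hpos
  have hsum := sum_split T hpos
  have hsub2 := sum_sub2 T
  have hET : T.edgeFinset.card + 1 = n := hTree.card_edgeFinset
  have hFsubT : F.edgeFinset ⊆ T.edgeFinset := SimpleGraph.edgeFinset_mono hFT
  have hRcard : R.card = T.edgeFinset.card - F.edgeFinset.card := by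
    rw [hR, Finset.card_sdiff_of_subset hFsubT]
  have hFle : F.edgeFinset.card ≤ T.edgeFinset.card := Finset.card_le_card hFsubT
  have hFcov : IsPathCoverOf G F := ⟨le_trans hFT hTG, isAcyclic_mono hFT hTree.IsAcyclic, hFdeg⟩
  have hFP : F.edgeSet.ncard ≤ P.edgeSet.ncard := hP.2 F hFcov
  rw [ncard_edge] at hFP
  have hint : internalCount T = Big.card := internal_eq T
  have hb1 : Big.sum (fun v => T.degree v - 2)
      = ∑ v ∈ univ.filter (fun v => 2 ≤ T.degree v), (T.degree v - 2) := rfl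
  have hb2 : Big.sum (fun v => T.degree v)
      = ∑ v ∈ univ.filter (fun v => 2 ≤ T.degree v), (T.degree v) := rfl
  have hb3 : Big.card = (univ.filter (fun v => 2 ≤ T.degree v)).card := rfl
  have hb4 : L1.card = (univ.filter (fun v => T.degree v = 1)).card := rfl
  rw [hint]
  omega
end PartA

section PartB
variable {V : Type*} [Fintype V]

/-- The core construction in the disconnected case. -/
lemma partB_core {G P : SimpleGraph V} (h2 : 2 ≤ Fintype.card V)
    (hP : IsOptPathCoverOf G P) (hpre : ¬P.Preconnected)
    (A₀ B₀ : Finset V) (hdisj : Disjoint A₀ B₀)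
    (hadj : ∀ a ∈ A₀, ∀ b ∈ B₀, G.Adj a b)
    (hEPA : ∀ v : V, (P.neighborSet v).ncard ≤ 1 → v ∈ A₀) (hB₀ne : B₀.Nonempty) :
    ∃ T : SimpleGraph V, (T ≤ G ∧ T.IsTree) ∧ P.edgeSet.ncard - 1 ≤ internalCount T := by
  classical
  have hNV : Nonempty V := Fintype.card_pos_iff.mp (by omega)
  have hlow := exists_lowdeg hP.1.2.1
  have hdeg2 : ∀ v : V, P.degree v ≤ 2 := by
    intro v
    rw [← ncard_nbr]
    exact hP.1.2.2 v
  have hEPA' : ∀ v : V, P.degree v ≤ 1 → v ∈ A₀ := by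
    intro v hv
    exact hEPA v (by rw [ncard_nbr]; exact hv)
  obtain ⟨b, hbB⟩ := hB₀ne
  have hbnotA : b ∉ A₀ := fun h => Finset.disjoint_left.mp hdisj h hbB
  have hbdeg : P.degree b = 2 := by
    have h1 : ¬ P.degree b ≤ 1 := fun h => hbnotA (hEPA' b h)
    have := hdeg2 b
    omega
  haveI : Fintype P.ConnectedComponent := Fintype.ofFinite _
  -- choose endpoint in each component
  have hKex : ∀ Q : P.ConnectedComponent, ∃ w, P.connectedComponentMk w = Q ∧ P.degree w ≤ 1 := by
    intro Q
    obtain ⟨w, hr, hd⟩ := hlow Q.out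
    refine ⟨w, ?_, hd⟩
    have h1 : P.connectedComponentMk Q.out = P.connectedComponentMk w :=
      ConnectedComponent.sound hr
    have h2 : P.connectedComponentMk Q.out = Q := Q.out_eq
    rw [← h1, h2]
  choose K hKmk hKdeg using hKex
  have hKinj : Function.Injective K := fun Q₁ Q₂ h => by rw [← hKmk Q₁, ← hKmk Q₂, h]
  have hKA : ∀ Q, K Q ∈ A₀ := fun Q => hEPA' _ (hKdeg Q)
  have hKb : ∀ Q, K Q ≠ b := fun Q h => hbnotA (h ▸ hKA Q)
  set Γ : Finset P.ConnectedComponent := univ.erase (P.connectedComponentMk b) with hΓ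
  have hΓne : Γ.Nonempty := by
    rw [SimpleGraph.Preconnected] at hpre
    push_neg at hpre
    obtain ⟨u, v, huv⟩ := hpre
    have hne : P.connectedComponentMk u ≠ P.connectedComponentMk v :=
      fun h => huv (ConnectedComponent.exact h)
    by_cases hu : P.connectedComponentMk u = P.connectedComponentMk b
    · exact ⟨P.connectedComponentMk v, Finset.mem_erase.mpr ⟨fun h => hne (hu.trans h.symm),
        Finset.mem_univ _⟩⟩
    · exact ⟨P.connectedComponentMk u, Finset.mem_erase.mpr ⟨hu, Finset.mem_univ _⟩⟩
  -- the tree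
  set S : SimpleGraph V := fromEdgeSet ((fun Q => s(b, K Q)) '' (Γ : Set P.ConnectedComponent))
    with hS
  set T : SimpleGraph V := P ⊔ S with hT
  -- characterize S adjacency
  have hSadj_mk : ∀ Q ∈ Γ, S.Adj b (K Q) := by
    intro Q hQ
    rw [hS, fromEdgeSet_adj]
    exact ⟨⟨Q, hQ, rfl⟩, Ne.symm (hKb Q)⟩
  have hSadj_dest : ∀ u v, S.Adj u v →
      ∃ Q ∈ Γ, (u = b ∧ v = K Q) ∨ (v = b ∧ u = K Q) := by
    intro u v huv
    rw [hS, fromEdgeSet_adj] at huv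
    obtain ⟨⟨Q, hQ, hQe⟩, hne⟩ := huv
    rw [Sym2.eq_iff] at hQe
    rcases hQe with ⟨hb, hk⟩ | ⟨hb, hk⟩
    · exact ⟨Q, hQ, Or.inl ⟨hb.symm, hk.symm⟩⟩
    · exact ⟨Q, hQ, Or.inr ⟨hb.symm, hk.symm⟩⟩
  have hPS : ∀ u v, S.Adj u v → ¬P.Adj u v := by
    intro u v hSuv hPuv
    obtain ⟨Q, hQΓ, hcase⟩ := hSadj_dest u v hSuv
    apply (Finset.mem_erase.mp hQΓ).1
    rcases hcase with ⟨hu, hv⟩ | ⟨hu, hv⟩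
    · rw [← hKmk Q, ← hv]
      have hbv : P.Adj b v := by rw [← hu]; exact hPuv
      exact SimpleGraph.ConnectedComponent.connectedComponentMk_eq_of_adj hbv.symm
    · rw [← hKmk Q, ← hv]
      have hub : P.Adj u b := by rw [← hu]; exact hPuv
      exact SimpleGraph.ConnectedComponent.connectedComponentMk_eq_of_adj hub
  have hTG : T ≤ G := by
    rw [hT]
    apply sup_le hP.1.1
    intro u v huv
    obtain ⟨Q, hQΓ, hcase⟩ := hSadj_dest u v huv
    rcases hcase with ⟨hu, hv⟩ | ⟨hu, hv⟩
    · rw [hu, hv]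
      exact (hadj (K Q) (hKA Q) b hbB).symm
    · rw [hu, hv]
      exact hadj (K Q) (hKA Q) b hbB
  -- reachability invariant
  have hreach : ∀ (W : Finset P.ConnectedComponent), W ⊆ Γ → ∀ u v,
      (P ⊔ fromEdgeSet ((fun Q => s(b, K Q)) '' (W : Set P.ConnectedComponent))).Reachable u v →
      P.connectedComponentMk u = P.connectedComponentMk v ∨
        (P.connectedComponentMk u ∈ insert (P.connectedComponentMk b) W ∧
         P.connectedComponentMk v ∈ insert (P.connectedComponentMk b) W) := by
    intro W hW u v huv
    obtain ⟨p⟩ := huv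
    induction p with
    | nil => exact Or.inl rfl
    | @cons a a' c hadj' q ih =>
      have hstep : P.connectedComponentMk a = P.connectedComponentMk a' ∨
          (P.connectedComponentMk a ∈ insert (P.connectedComponentMk b) W ∧
           P.connectedComponentMk a' ∈ insert (P.connectedComponentMk b) W) := by
        rw [SimpleGraph.sup_adj] at hadj'
        rcases hadj' with hp | hs
        · exact Or.inl (SimpleGraph.ConnectedComponent.connectedComponentMk_eq_of_adj hp)
        · right
          rw [fromEdgeSet_adj] at hs
          obtain ⟨⟨Q, hQ, hQe⟩, hne⟩ := hs
          rw [Sym2.eq_iff] at hQe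
          rcases hQe with ⟨hb, hk⟩ | ⟨hb, hk⟩
          · rw [← hb, ← hk]
            exact ⟨Finset.mem_insert_self _ _,
              Finset.mem_insert_of_mem (by rw [hKmk]; exact hQ)⟩
          · rw [← hb, ← hk]
            exact ⟨Finset.mem_insert_of_mem (by rw [hKmk]; exact hQ),
              Finset.mem_insert_self _ _⟩
      rcases hstep with h | h <;> rcases ih with h' | h'
      · exact Or.inl (h.trans h')
      · exact Or.inr ⟨h ▸ h'.1, h'.2⟩
      · exact Or.inr ⟨h.1, h' ▸ h.2⟩
      · exact Or.inr ⟨h.1, h'.2⟩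
  -- acyclicity
  have hacyc : ∀ (W : Finset P.ConnectedComponent), W ⊆ Γ →
      (P ⊔ fromEdgeSet ((fun Q => s(b, K Q)) '' (W : Set P.ConnectedComponent))).IsAcyclic := by
    intro W
    induction W using Finset.induction with
    | empty =>
      intro _
      rw [Finset.coe_empty, Set.image_empty, fromEdgeSet_empty, sup_bot_eq]
      exact hP.1.2.1
    | @insert Q₀ W hQ₀W ih =>
      intro hsub
      have hQ₀Γ : Q₀ ∈ Γ := hsub (Finset.mem_insert_self _ _)
      have hWΓ : W ⊆ Γ := fun q hq => hsub (Finset.mem_insert_of_mem hq)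
      have himg : ((fun Q => s(b, K Q)) '' ((insert Q₀ W : Finset _) : Set _))
          = ((fun Q => s(b, K Q)) '' (W : Set _)) ∪ {s(b, K Q₀)} := by
        rw [Finset.coe_insert, Set.image_insert_eq, Set.union_comm, ← Set.insert_eq]
      rw [himg, fromEdgeSet_union, ← sup_assoc]
      apply acyclic_sup_edge (ih hWΓ)
      intro hr
      rcases hreach W hWΓ b (K Q₀) hr with h | h
      · exact (Finset.mem_erase.mp hQ₀Γ).1 (h ▸ (hKmk Q₀)).symm
      · have := h.2
        rw [hKmk] at this
        rcases Finset.mem_insert.mp this with h' | h'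
        · exact (Finset.mem_erase.mp hQ₀Γ).1 h'
        · exact hQ₀W h'
  have hTacyc : T.IsAcyclic := by
    have := hacyc Γ (Finset.Subset.refl _)
    rw [hT, hS]
    exact this
  -- connectivity
  have hTconn : T.Connected := by
    rw [connected_iff]
    refine ⟨?_, hNV⟩
    have hub : ∀ w : V, T.Reachable w b := by
      intro w
      have hwK : P.Reachable w (K (P.connectedComponentMk w)) :=
        ConnectedComponent.exact (hKmk _).symm
      have hPT : P ≤ T := le_sup_left
      by_cases hwcb : P.connectedComponentMk w = P.connectedComponentMk b
      · exact (ConnectedComponent.exact hwcb).mono hPT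
      · have hQΓ : P.connectedComponentMk w ∈ Γ :=
          Finset.mem_erase.mpr ⟨hwcb, Finset.mem_univ _⟩
        have e1 : T.Adj b (K (P.connectedComponentMk w)) := by
          rw [hT, SimpleGraph.sup_adj]
          exact Or.inr (hSadj_mk _ hQΓ)
        exact (hwK.mono hPT).trans e1.symm.reachable
    intro u v
    exact (hub u).trans (hub v).symm
  have hTree : T.IsTree := ⟨hTconn, hTacyc⟩
  refine ⟨T, ⟨hTG, hTree⟩, ?_⟩
  -- ===== counting =====
  have hSE : S.edgeSet = ((fun Q => s(b, K Q)) '' (Γ : Set P.ConnectedComponent)) := by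
    rw [hS, edgeSet_fromEdgeSet]
    ext e
    simp only [Set.mem_diff, Set.mem_setOf_eq]
    constructor
    · exact fun h => h.1
    · intro h
      refine ⟨h, ?_⟩
      obtain ⟨Q, hQ, rfl⟩ := h
      change ¬ (s(b, K Q)).IsDiag
      rw [Sym2.isDiag_iff_proj_eq]
      exact fun hh => (hKb Q) hh.symm
  have hinj2 : Function.Injective (fun Q : P.ConnectedComponent => s(b, K Q)) := by
    intro Q₁ Q₂ h
    simp only [Sym2.eq_iff] at h
    rcases h with ⟨-, hk⟩ | ⟨hb2, -⟩
    · exact hKinj hk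
    · exact absurd hb2.symm (hKb Q₂)
  have hScard : S.edgeSet.ncard = Γ.card := by
    rw [hSE, Set.ncard_image_of_injective _ hinj2, Set.ncard_coe_finset]
  have hdisjE : Disjoint P.edgeSet S.edgeSet := by
    rw [Set.disjoint_left]
    intro e heP heS
    induction e using Sym2.ind with
    | _ u v =>
      rw [SimpleGraph.mem_edgeSet] at heP heS
      exact hPS u v heS heP
  have hTcard : T.edgeSet.ncard = P.edgeSet.ncard + Γ.card := by
    rw [hT, edgeSet_sup, Set.ncard_union_eq hdisjE (Set.toFinite _) (Set.toFinite _), hScard]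
  have hTn : T.edgeFinset.card + 1 = Fintype.card V := hTree.card_edgeFinset
  have hnf : ∀ v, T.neighborFinset v = P.neighborFinset v ∪ S.neighborFinset v := by
    intro v
    ext x
    simp only [SimpleGraph.mem_neighborFinset, Finset.mem_union, hT, SimpleGraph.sup_adj]
  have hnfdisj : ∀ v, Disjoint (P.neighborFinset v) (S.neighborFinset v) := by
    intro v
    rw [Finset.disjoint_right]
    intro x hx hxP
    rw [SimpleGraph.mem_neighborFinset] at hx hxP
    exact hPS v x hx hxP
  have hdegT : ∀ v, T.degree v = P.degree v + S.degree v := by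
    intro v
    rw [← SimpleGraph.card_neighborFinset_eq_degree, ← SimpleGraph.card_neighborFinset_eq_degree,
      ← SimpleGraph.card_neighborFinset_eq_degree, hnf, Finset.card_union_of_disjoint (hnfdisj v)]
  set W : Finset V := Γ.image K with hW
  have hdegS_K : ∀ v ∈ W, S.degree v = 1 := by
    intro v hv
    obtain ⟨Q, hQΓ, rfl⟩ := Finset.mem_image.mp hv
    have hsingle : S.neighborFinset (K Q) = {b} := by
      ext x
      rw [SimpleGraph.mem_neighborFinset, Finset.mem_singleton]
      constructor
      · intro hx
        obtain ⟨Q', hQ', hcase⟩ := hSadj_dest _ _ hx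
        rcases hcase with ⟨hu, hv'⟩ | ⟨hu, hv'⟩
        · exact absurd hu (hKb Q)
        · exact hu
      · rintro rfl
        exact (hSadj_mk Q hQΓ).symm
    rw [← SimpleGraph.card_neighborFinset_eq_degree, hsingle, Finset.card_singleton]
  have hdegS_other : ∀ v, v ≠ b → v ∉ W → S.degree v = 0 := by
    intro v hvb hvW
    rw [← SimpleGraph.card_neighborFinset_eq_degree, Finset.card_eq_zero]
    ext x
    simp only [SimpleGraph.mem_neighborFinset, Finset.notMem_empty, iff_false]
    intro hx
    obtain ⟨Q', hQ', hcase⟩ := hSadj_dest _ _ hx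
    rcases hcase with ⟨hu, hv'⟩ | ⟨hu, hv'⟩
    · exact hvb hu
    · exact hvW (by rw [hv']; exact Finset.mem_image_of_mem K hQ')
  have hWcard : W.card = Γ.card := Finset.card_image_of_injective _ hKinj
  have hWdeg : ∀ v ∈ W, P.degree v ≤ 1 := by
    intro v hv
    obtain ⟨Q, hQΓ, rfl⟩ := Finset.mem_image.mp hv
    exact hKdeg Q
  set LvT := univ.filter (fun v => T.degree v = 1) with hLvT
  set F1 := univ.filter (fun v => P.degree v = 1) with hF1
  set F0 := univ.filter (fun v => P.degree v = 0) with hF0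
  have hsubL : LvT ⊆ (F1 \ W) ∪ (W.filter (fun v => P.degree v = 0)) := by
    intro v hv
    rw [hLvT, Finset.mem_filter] at hv
    have hdv := hv.2
    by_cases hvb : v = b
    · exfalso
      rw [hvb, hdegT] at hdv
      omega
    by_cases hvW : v ∈ W
    · apply Finset.mem_union_right
      rw [Finset.mem_filter]
      have hz := hdegS_K v hvW
      rw [hdegT v, hz] at hdv
      exact ⟨hvW, by omega⟩
    · apply Finset.mem_union_left
      rw [Finset.mem_sdiff, hF1, Finset.mem_filter]
      have hz := hdegS_other v hvb hvW
      rw [hdegT v, hz] at hdv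
      exact ⟨⟨Finset.mem_univ _, by omega⟩, hvW⟩
  have hp1 : (F1 \ W).card + (F1 ∩ W).card = F1.card := Finset.card_sdiff_add_card_inter _ _
  have hp2 : (W.filter (fun v => P.degree v = 1)).card
      + (W.filter (fun v => ¬ P.degree v = 1)).card = W.card :=
    Finset.card_filter_add_card_filter_not _
  have hp3 : (W.filter (fun v => P.degree v = 1)).card = (F1 ∩ W).card := by
    congr 1
    ext v
    rw [Finset.mem_filter, Finset.mem_inter, hF1, Finset.mem_filter]
    constructor
    · rintro ⟨h1, h2⟩
      exact ⟨⟨Finset.mem_univ _, h2⟩, h1⟩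
    · rintro ⟨⟨-, h2⟩, h1⟩
      exact ⟨h1, h2⟩
  have hp4 : W.filter (fun v => ¬ P.degree v = 1) = W.filter (fun v => P.degree v = 0) := by
    apply Finset.filter_congr
    intro v hv
    have := hWdeg v hv
    constructor
    · intro h; omega
    · intro h; omega
  have hp4' : (W.filter (fun v => ¬ P.degree v = 1)).card
      = (W.filter (fun v => P.degree v = 0)).card := by rw [hp4]
  have hp5 : (W.filter (fun v => P.degree v = 0)).card ≤ F0.card := by
    apply Finset.card_le_card
    intro v hv
    rw [Finset.mem_filter] at hv
    rw [hF0, Finset.mem_filter]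
    exact ⟨Finset.mem_univ _, hv.2⟩
  set BigP := univ.filter (fun v => 2 ≤ P.degree v) with hBigP
  set Small := univ.filter (fun v => ¬ 2 ≤ P.degree v) with hSmall
  have hi1 : BigP.card + Small.card = Fintype.card V :=
    Finset.card_filter_add_card_filter_not _
  have hi2 : (BigP.sum fun v => P.degree v) + (Small.sum fun v => P.degree v)
      = 2 * P.edgeFinset.card := by
    rw [hBigP, hSmall, Finset.sum_filter_add_sum_filter_not,
      SimpleGraph.sum_degrees_eq_twice_card_edges]
  have hi3 : (BigP.sum fun v => P.degree v) = 2 * BigP.card := by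
    rw [Finset.card_eq_sum_ones, Finset.mul_sum]
    apply Finset.sum_congr rfl
    intro v hv
    rw [hBigP, Finset.mem_filter] at hv
    have := hdeg2 v
    omega
  have he1 : Small.filter (fun v => P.degree v = 1) = F1 := by
    ext v
    rw [Finset.mem_filter, hSmall, Finset.mem_filter, hF1, Finset.mem_filter]
    constructor
    · rintro ⟨⟨-, -⟩, h1⟩
      exact ⟨Finset.mem_univ _, h1⟩
    · rintro ⟨-, h1⟩
      exact ⟨⟨Finset.mem_univ _, by omega⟩, h1⟩
  have he4 : Small.filter (fun v => ¬ P.degree v = 1) = F0 := by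
    ext v
    rw [Finset.mem_filter, hSmall, Finset.mem_filter, hF0, Finset.mem_filter]
    constructor
    · rintro ⟨⟨-, h2⟩, h1⟩
      exact ⟨Finset.mem_univ _, by omega⟩
    · rintro ⟨-, h0⟩
      exact ⟨⟨Finset.mem_univ _, by omega⟩, by omega⟩
  have hi6 : (Small.sum fun v => P.degree v) = F1.card := by
    rw [← Finset.sum_filter_add_sum_filter_not Small (fun v => P.degree v = 1), he1, he4]
    have e2 : (F0.sum fun v => P.degree v) = 0 := by
      apply Finset.sum_eq_zero
      intro v hv
      rw [hF0, Finset.mem_filter] at hv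
      exact hv.2
    have e3 : (F1.sum fun v => P.degree v) = F1.card := by
      rw [Finset.card_eq_sum_ones]
      apply Finset.sum_congr rfl
      intro v hv
      rw [hF1, Finset.mem_filter] at hv
      exact hv.2
    rw [e2, e3, add_zero]
  have hSmallcard : Small.card = F1.card + F0.card := by
    have hh := Finset.card_filter_add_card_filter_not
      (s := Small) (p := fun v => P.degree v = 1)
    rw [he1, he4] at hh
    omega
  have hTpos : ∀ v, 0 < T.degree v := deg_pos hTconn h2
  have hsplitT := card_split T hTpos
  have hintT := internal_eq T
  have hPedge : P.edgeSet.ncard = P.edgeFinset.card := ncard_edge P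
  have hTn' : T.edgeSet.ncard + 1 = Fintype.card V := by
    have h := hTn
    rw [SimpleGraph.edgeFinset, Set.toFinset_card] at h
    rw [← Nat.card_coe_set_eq, Nat.card_eq_fintype_card]
    rw [← h]
  have hLle : LvT.card ≤ (F1 \ W).card + (W.filter (fun v => P.degree v = 0)).card := by
    calc LvT.card ≤ ((F1 \ W) ∪ (W.filter (fun v => P.degree v = 0))).card :=
          Finset.card_le_card hsubL
      _ ≤ _ := Finset.card_union_le _ _
  have hbr1 : LvT.card = (univ.filter (fun v => T.degree v = 1)).card := rfl
  have hbr2 : (univ.filter (fun v => 2 ≤ T.degree v)).card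
      + (univ.filter (fun v => T.degree v = 1)).card = Fintype.card V := hsplitT
  rw [hintT]
  omega

end PartB


section PartBMain
variable {V : Type*}

lemma partB [Fintype V] {G P : SimpleGraph V} (hG : G.Connected) (h2 : 2 ≤ Fintype.card V)
    (hco : IsCograph G) (hP : IsOptPathCoverOf G P) :
    ∃ T : SimpleGraph V, (T ≤ G ∧ T.IsTree) ∧ P.edgeSet.ncard - 1 ≤ internalCount T := by
  classical
  have hNV : Nonempty V := Fintype.card_pos_iff.mp (by omega)
  by_cases hpre : P.Preconnected
  · have hPconn : P.Connected := (SimpleGraph.connected_iff P).mpr ⟨hpre, hNV⟩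
    have hTree : P.IsTree := ⟨hPconn, hP.1.2.1⟩
    refine ⟨P, ⟨hP.1.1, hTree⟩, ?_⟩
    have hdeg2 : ∀ v : V, P.degree v ≤ 2 := fun v => by rw [← ncard_nbr]; exact hP.1.2.2 v
    have hpos := deg_pos hPconn h2
    have hE : P.edgeFinset.card + 1 = Fintype.card V := hTree.card_edgeFinset
    have hsplit := card_split P hpos
    have hsum := sum_split P hpos
    have hBig2 : (univ.filter (fun v => 2 ≤ P.degree v)).sum (fun v => P.degree v)
        = 2 * (univ.filter (fun v => 2 ≤ P.degree v)).card := by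
      rw [Finset.card_eq_sum_ones, Finset.mul_sum]
      apply Finset.sum_congr rfl
      intro v hv
      rw [Finset.mem_filter] at hv
      have := hdeg2 v
      omega
    rw [internal_eq P, ncard_edge P]
    omega
  · obtain ⟨A, B, hAne, hBne, hABdisj, hABunion, hABadj⟩ := sein_join hG h2 hco
    have hmemAB : ∀ v : V, v ∈ A ∨ v ∈ B := fun v =>
      Finset.mem_union.mp (hABunion ▸ Finset.mem_univ v)
    have hlow := exists_lowdeg hP.1.2.1
    have hD1 : ∀ u v : V, P.degree u ≤ 1 → P.degree v ≤ 1 → ¬P.Reachable u v →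
        ¬G.Adj u v := by
      intro u v hu hv hr
      exact pathcover_aug hP (by rw [ncard_nbr]; exact hu) (by rw [ncard_nbr]; exact hv) hr
    have hside0 : ∀ u v : V, ¬G.Adj u v → (u ∈ A ↔ v ∈ A) := by
      intro u v hnadj
      constructor
      · intro huA
        rcases hmemAB v with h | h
        · exact h
        · exact absurd (hABadj u huA v h) hnadj
      · intro hvA
        rcases hmemAB u with h | h
        · exact h
        · exact absurd (hABadj v hvA u h).symm hnadj
    have hside : ∀ u v : V, P.degree u ≤ 1 → P.degree v ≤ 1 → (u ∈ A ↔ v ∈ A) := by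
      intro u v hu hv
      by_cases heq : u = v
      · rw [heq]
      by_cases hr : P.Reachable u v
      · rw [SimpleGraph.Preconnected] at hpre
        push_neg at hpre
        obtain ⟨p, q, hpq⟩ := hpre
        have hz : ∃ z, ¬P.Reachable u z := by
          by_cases h1 : P.Reachable u p
          · exact ⟨q, fun h => hpq (h1.symm.trans h)⟩
          · exact ⟨p, h1⟩
        obtain ⟨z, hz⟩ := hz
        obtain ⟨w, hwz, hwdeg⟩ := hlow z
        have hru : ¬P.Reachable u w := fun h => hz (h.trans hwz.symm)
        have hrv : ¬P.Reachable v w := fun h => hru (hr.trans h)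
        have i1 := hside0 u w (hD1 u w hu hwdeg hru)
        have i2 := hside0 v w (hD1 v w hv hwdeg hrv)
        rw [i1, i2]
      · exact hside0 u v (hD1 u v hu hv hr)
    obtain ⟨w₀, hw₀r, hw₀deg⟩ := hlow (Classical.arbitrary V)
    rcases hmemAB w₀ with hw₀A | hw₀B
    · apply partB_core h2 hP hpre A B hABdisj hABadj ?_ hBne
      intro v hv
      rw [ncard_nbr] at hv
      exact (hside v w₀ hv hw₀deg).mpr hw₀A
    · apply partB_core h2 hP hpre B A hABdisj.symm
        (fun a ha b hb => (hABadj b hb a ha).symm) ?_ hAne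
      intro v hv
      rw [ncard_nbr] at hv
      rcases hmemAB v with h | h
      · exfalso
        have := (hside v w₀ hv hw₀deg).mp h
        exact Finset.disjoint_left.mp hABdisj ((hside w₀ v hw₀deg hv).mpr h) hw₀B
      · exact h

end PartBMain

theorem stmt12 {V : Type*} [Fintype V] (G : SimpleGraph V) (hG : G.Connected)
    (hcard : 2 ≤ Fintype.card V) (hco : IsCograph G)
    (P : SimpleGraph V) (hP : IsOptPathCoverOf G P) :
    (∃ T, IsSpanningTreeOf G T ∧ internalCount T = P.edgeSet.ncard - 1) ∧
    (∀ T, IsSpanningTreeOf G T → internalCount T ≤ P.edgeSet.ncard - 1) := by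
  constructor
  · obtain ⟨T, hT, hge⟩ := partB hG hcard hco hP
    exact ⟨T, ⟨hT.1, hT.2⟩, Nat.le_antisymm (partA hcard hT.1 hT.2 hP) hge⟩
  · intro T hT
    exact partA hcard hT.1 hT.2 hP
end

section
/- Let G = (X, Y, E) be a connected bipartite graph with a strong ordering (<_X, <_Y). Then for every vertex v, the neighbors of v are consecutive in the ordering of the opposite side (adjacency property), and for u < v on the same side, f(u) ≤ f(v) and l(u) ≤ l(v), where f and l denote the first and last neighbors in the ordering. -/
open SimpleGraph

/-- `(X, Y)` is a bipartition of `G`. -/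
def IsBipartition {V : Type*} (G : SimpleGraph V) (X Y : Set V) : Prop :=
  (∀ v, (v ∈ X ∧ v ∉ Y) ∨ (v ∈ Y ∧ v ∉ X)) ∧
  (∀ u v, G.Adj u v → (u ∈ X ∧ v ∈ Y) ∨ (u ∈ Y ∧ v ∈ X))

/-- `(ox, oy)` is a strong ordering of the bipartite graph `G` with parts `X`, `Y`:
for edges `a b` and `a' b'` with `a, a' ∈ X`, `b, b' ∈ Y`, if `a < a'` and `b' < b`
then `a b'` and `a' b` are also edges. -/
def StrongOrdering {V : Type*} (G : SimpleGraph V) (X Y : Set V)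
    (ox oy : V → ℕ) : Prop :=
  ∀ a a' b b', a ∈ X → a' ∈ X → b ∈ Y → b' ∈ Y → G.Adj a b → G.Adj a' b' →
    ox a < ox a' → oy b' < oy b → G.Adj a b' ∧ G.Adj a' b

lemma exists_neighbor {V : Type*} (G : SimpleGraph V) (u v : V)
    (h : G.Reachable u v) (hne : u ≠ v) : ∃ w, G.Adj u w := by
  obtain ⟨p⟩ := h
  cases p with
  | nil => exact absurd rfl hne
  | cons h _ => exact ⟨_, h⟩

theorem stmt15 {V : Type*} [Fintype V] (G : SimpleGraph V) (hG : G.Connected)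
    (X Y : Set V) (hbip : IsBipartition G X Y)
    (ox oy : V → ℕ) (n1 n2 : ℕ)
    (hox : Set.BijOn ox X (Set.Icc 1 n1)) (hoy : Set.BijOn oy Y (Set.Icc 1 n2))
    (hstrong : StrongOrdering G X Y ox oy) :
    -- adjacency property: neighborhoods are consecutive
    (∀ y ∈ Y, ∀ x₁ ∈ X, ∀ x₂ ∈ X, ∀ x₃ ∈ X, ox x₁ < ox x₂ → ox x₂ < ox x₃ →
      G.Adj x₁ y → G.Adj x₃ y → G.Adj x₂ y) ∧
    (∀ x ∈ X, ∀ y₁ ∈ Y, ∀ y₂ ∈ Y, ∀ y₃ ∈ Y, oy y₁ < oy y₂ → oy y₂ < oy y₃ →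
      G.Adj x y₁ → G.Adj x y₃ → G.Adj x y₂) ∧
    -- monotonicity of first and last neighbors on the X side
    (∀ u ∈ X, ∀ v ∈ X, ox u < ox v →
      (∀ b ∈ Y, ∀ b' ∈ Y,
        (G.Adj u b ∧ ∀ c ∈ Y, G.Adj u c → oy b ≤ oy c) →
        (G.Adj v b' ∧ ∀ c ∈ Y, G.Adj v c → oy b' ≤ oy c) → oy b ≤ oy b') ∧
      (∀ b ∈ Y, ∀ b' ∈ Y,
        (G.Adj u b ∧ ∀ c ∈ Y, G.Adj u c → oy c ≤ oy b) →
        (G.Adj v b' ∧ ∀ c ∈ Y, G.Adj v c → oy c ≤ oy b') → oy b ≤ oy b')) ∧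
    -- monotonicity of first and last neighbors on the Y side
    (∀ u ∈ Y, ∀ v ∈ Y, oy u < oy v →
      (∀ b ∈ X, ∀ b' ∈ X,
        (G.Adj u b ∧ ∀ c ∈ X, G.Adj u c → ox b ≤ ox c) →
        (G.Adj v b' ∧ ∀ c ∈ X, G.Adj v c → ox b' ≤ ox c) → ox b ≤ ox b') ∧
      (∀ b ∈ X, ∀ b' ∈ X,
        (G.Adj u b ∧ ∀ c ∈ X, G.Adj u c → ox c ≤ ox b) →
        (G.Adj v b' ∧ ∀ c ∈ X, G.Adj v c → ox c ≤ ox b') → ox b ≤ ox b')) := by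
  obtain ⟨hpart, hedge⟩ := hbip
  -- neighbors of X-vertices are in Y, and vice versa
  have hXY : ∀ x ∈ X, ∀ w, G.Adj x w → w ∈ Y := by
    intro x hx w hadj
    rcases hedge x w hadj with ⟨_, hw⟩ | ⟨hxY, _⟩
    · exact hw
    · rcases hpart x with ⟨_, h2⟩ | ⟨_, h2⟩
      · exact absurd hxY h2
      · exact absurd hx h2
  have hYX : ∀ y ∈ Y, ∀ w, G.Adj y w → w ∈ X := by
    intro y hy w hadj
    rcases hedge y w hadj with ⟨hyX, _⟩ | ⟨_, hw⟩
    · rcases hpart y with ⟨_, h2⟩ | ⟨_, h2⟩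
      · exact absurd hy h2
      · exact absurd hyX h2
    · exact hw
  refine ⟨?_, ?_, ?_, ?_⟩
  · -- adjacency property on X side
    intro y hy x₁ hx₁ x₂ hx₂ x₃ hx₃ h12 h23 h1y h3y
    -- x₂ ≠ y since they are in different parts
    have hxy : x₂ ≠ y := by
      intro h; subst h
      rcases hpart x₂ with ⟨_, h2⟩ | ⟨_, h2⟩
      · exact h2 hy
      · exact h2 hx₂
    obtain ⟨b, hb⟩ := exists_neighbor G x₂ y (hG.preconnected x₂ y) hxy
    have hbY : b ∈ Y := hXY x₂ hx₂ b hb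
    rcases lt_trichotomy (oy b) (oy y) with hlt | heq | hgt
    · exact (hstrong x₁ x₂ y b hx₁ hx₂ hy hbY h1y hb h12 hlt).2
    · have : b = y := hoy.injOn hbY hy heq
      exact this ▸ hb
    · exact (hstrong x₂ x₃ b y hx₂ hx₃ hbY hy hb h3y h23 hgt).1
  · -- adjacency property on Y side
    intro x hx y₁ hy₁ y₂ hy₂ y₃ hy₃ h12 h23 h1 h3
    have hxy : y₂ ≠ x := by
      intro h; subst h
      rcases hpart y₂ with ⟨_, h2⟩ | ⟨_, h2⟩
      · exact h2 hy₂
      · exact h2 hx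
    obtain ⟨a, ha⟩ := exists_neighbor G y₂ x (hG.preconnected y₂ x) hxy
    have haX : a ∈ X := hYX y₂ hy₂ a ha
    rcases lt_trichotomy (ox a) (ox x) with hlt | heq | hgt
    · exact (hstrong a x y₂ y₁ haX hx hy₂ hy₁ ha.symm h1 hlt h12).2
    · have : a = x := hox.injOn haX hx heq
      exact this ▸ ha.symm
    · exact (hstrong x a y₃ y₂ hx haX hy₃ hy₂ h3 ha.symm hgt h23).1
  · -- monotonicity on X side
    intro u hu v hv huv
    constructor
    · rintro b hb b' hb' ⟨hub, hmin⟩ ⟨hvb', _⟩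
      by_contra hlt
      push_neg at hlt
      have := (hstrong u v b b' hu hv hb hb' hub hvb' huv hlt).1
      exact absurd (hmin b' hb' this) (not_le.mpr hlt)
    · rintro b hb b' hb' ⟨hub, _⟩ ⟨hvb', hmax⟩
      by_contra hlt
      push_neg at hlt
      have := (hstrong u v b b' hu hv hb hb' hub hvb' huv hlt).2
      exact absurd (hmax b hb this) (not_le.mpr hlt)
  · -- monotonicity on Y side
    intro u hu v hv huv
    constructor
    · rintro b hb b' hb' ⟨hub, hmin⟩ ⟨hvb', _⟩
      by_contra hlt
      push_neg at hlt
      have := (hstrong b' b v u hb' hb hv hu hvb'.symm hub.symm hlt huv).1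
      exact absurd (hmin b' hb' this.symm) (not_le.mpr hlt)
    · rintro b hb b' hb' ⟨hub, _⟩ ⟨hvb', hmax⟩
      by_contra hlt
      push_neg at hlt
      have := (hstrong b' b v u hb' hb hv hu hvb'.symm hub.symm hlt huv).2
      exact absurd (hmax b hb this.symm) (not_le.mpr hlt)
end

section
/- For every positive integer k there exists a connected bipartite permutation graph G on n = 5k vertices such that Opt(G) = |E(P*)| - k for an optimal path cover P* of G; hence no constant c satisfies Opt(G) ≥ |E(P*)| - c for all bipartite permutation graphs. -/
open SimpleGraph

/-- A bipartite permutation graph: a bipartite graph admitting a strong ordering. -/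
def IsBipartitePermutationGraph {V : Type*} (G : SimpleGraph V) : Prop :=
  ∃ (X Y : Set V) (ox oy : V → ℕ),
    IsBipartition G X Y ∧ Set.InjOn ox X ∧ Set.InjOn oy Y ∧
    StrongOrdering G X Y ox oy

namespace S19

/-- A graph in which every vertex has at most one neighbor with smaller value is acyclic. -/
lemma acyclic_of_unique_smaller {n : ℕ} (G : SimpleGraph (Fin n))
    (h : ∀ v x y : Fin n, G.Adj v x → G.Adj v y → x.val < v.val → y.val < v.val → x = y) :
    G.IsAcyclic := by
  intro u c hc
  have hsupne : c.support ≠ [] := c.support_ne_nil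
  obtain ⟨m, hm, hmax⟩ : ∃ m ∈ c.support, ∀ w ∈ c.support, w.val ≤ m.val := by
    classical
    have hne : c.support.toFinset.Nonempty := by
      simpa [List.toFinset_eq_empty_iff] using hsupne
    obtain ⟨m, hm, hmax⟩ := c.support.toFinset.exists_max_image Fin.val hne
    exact ⟨m, by simpa using hm, fun w hw => hmax w (by simpa using hw)⟩
  set c' := c.rotate m hm with hc'def
  have hc' : c'.IsCycle := hc.rotate hm
  have hsub : ∀ w : Fin n, w ∈ c'.support → w ∈ c.support := by
    intro w hw
    rw [c'.support_eq_cons] at hw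
    rcases List.mem_cons.1 hw with rfl | hw
    · exact hm
    · exact List.mem_of_mem_tail ((c.support_rotate m hm).mem_iff.1 hw)
  have hnil : ¬ c'.Nil := by
    have := hc'.three_le_length
    rw [Walk.nil_iff_length_eq]; omega
  set x := c'.getVert 1 with hx
  have hmx : G.Adj m x := c'.adj_snd hnil
  set q := c'.tail.reverse with hq
  have hqnil : ¬ q.Nil := by
    have h3 := hc'.three_le_length
    have hlt : c'.tail.length + 1 = c'.length := Walk.length_tail_add_one hnil
    rw [Walk.nil_iff_length_eq, hq, Walk.length_reverse]
    omega
  set y := q.getVert 1 with hy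
  have hmy : G.Adj m y := q.adj_snd hqnil
  have hedges : c'.edges = s(m, x) :: c'.tail.edges := by
    conv_lhs => rw [← c'.cons_tail_eq hnil]
    simp; exact Or.inl rfl
  have hyedge : s(m, y) ∈ c'.tail.edges := by
    have hq2 : q.edges = s(m, y) :: q.tail.edges := by
      conv_lhs => rw [← q.cons_tail_eq hqnil]
      simp; exact Or.inl rfl
    have : s(m, y) ∈ q.edges := by rw [hq2]; exact List.mem_cons_self
    rw [hq, Walk.edges_reverse, List.mem_reverse] at this
    exact this
  have hnodup : c'.edges.Nodup := hc'.edges_nodup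
  have hxy : x ≠ y := by
    rw [hedges] at hnodup
    intro hxyeq
    exact (List.nodup_cons.1 hnodup).1 (hxyeq ▸ hyedge)
  have hxs : x ∈ c'.support := Walk.snd_mem_support_of_mem_edges _ (hedges ▸ List.mem_cons_self)
  have hys : y ∈ c'.support := by
    apply Walk.snd_mem_support_of_mem_edges c'
    rw [hedges]; exact List.mem_cons_of_mem _ hyedge
  have hxlt : x.val < m.val := lt_of_le_of_ne (hmax x (hsub x hxs)) (by
    intro hval; exact G.irrefl (by rwa [show x = m from Fin.ext hval] at hmx))
  have hylt : y.val < m.val := lt_of_le_of_ne (hmax y (hsub y hys)) (by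
    intro hval; exact G.irrefl (by rwa [show y = m from Fin.ext hval] at hmy))
  exact hxy (h m x y hmx hmy hxlt hylt)

def grel (n d : ℕ) (u v : Fin n) : Prop := u.val % 5 = 0 ∧ u.val < v.val ∧ v.val ≤ u.val + d

instance {n d : ℕ} : DecidableRel (grel n d) := fun _ _ => by unfold grel; infer_instance

/-- The caterpillar graph (for `d = 5`) and its optimal path cover (for `d = 2`). -/
def GG (n d : ℕ) : SimpleGraph (Fin n) := SimpleGraph.fromRel (grel n d)

lemma GG_adj {n d : ℕ} {u v : Fin n} :
    (GG n d).Adj u v ↔ u ≠ v ∧ (grel n d u v ∨ grel n d v u) := by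
  simp [GG, SimpleGraph.fromRel_adj]

instance {n d : ℕ} : DecidableRel (GG n d).Adj := fun _ _ => decidable_of_iff' _ GG_adj

lemma GG_mono {n : ℕ} {d d' : ℕ} (h : d ≤ d') : GG n d ≤ GG n d' := by
  intro u v hadj
  rcases GG_adj.1 hadj with ⟨hne, hh | hh⟩ <;>
    exact GG_adj.2 ⟨hne, by unfold grel at *; omega⟩

variable {k : ℕ}

def pa (d v : ℕ) : ℕ := if v % 5 = 0 then v - d else 5 * (v / 5)

lemma spine_card : (Finset.univ.filter (fun v : Fin (5*k) => v.val % 5 = 0)).card = k := by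
  have h := Finset.card_bij
    (fun (v : Fin (5*k)) (_ : v ∈ Finset.univ.filter (fun v : Fin (5*k) => v.val % 5 = 0)) =>
      (⟨v.val / 5, by have := v.isLt; omega⟩ : Fin k))
    (fun a _ => Finset.mem_univ _)
    (by
      intro a ha b hb hab
      have h1 : a.val / 5 = b.val / 5 := by simpa using congrArg Fin.val hab
      simp only [Finset.mem_filter] at ha hb
      exact Fin.ext (by omega))
    (by
      intro j _
      refine ⟨⟨5*j.val, by have := j.isLt; omega⟩,
        Finset.mem_filter.2 ⟨Finset.mem_univ _, by simp [Nat.mul_mod_right]⟩, ?_⟩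
      exact Fin.ext (by simp))
  simpa using h

lemma pend12_card :
    (Finset.univ.filter (fun v : Fin (5*k) => v.val % 5 = 1 ∨ v.val % 5 = 2)).card = 2*k := by
  have h := Finset.card_bij
    (fun (v : Fin (5*k)) (hv : v ∈ Finset.univ.filter
        (fun v : Fin (5*k) => v.val % 5 = 1 ∨ v.val % 5 = 2)) =>
      (⟨2*(v.val/5) + v.val % 5 - 1, by
        have h1 := v.isLt
        have h2 := (Finset.mem_filter.1 hv).2
        omega⟩ : Fin (2*k)))
    (fun a _ => Finset.mem_univ _)
    (by
      intro a ha b hb hab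
      have h1 : 2*(a.val/5) + a.val % 5 - 1 = 2*(b.val/5) + b.val % 5 - 1 := by
        simpa using congrArg Fin.val hab
      simp only [Finset.mem_filter] at ha hb
      apply Fin.ext
      rcases ha.2 with h2 | h2 <;> rcases hb.2 with h3 | h3 <;> omega)
    (by
      intro j _
      refine ⟨⟨5*(j.val/2) + j.val % 2 + 1, by have := j.isLt; omega⟩,
        Finset.mem_filter.2 ⟨Finset.mem_univ _, by
          simp only []
          omega⟩, ?_⟩
      apply Fin.ext
      have := j.isLt
      simp only []
      omega)
  simpa using h

lemma edge_card (d : ℕ) (hd1 : 1 ≤ d) (hd : d ≤ 5) (pred : ℕ → Prop) [DecidablePred pred]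
    (hpred : ∀ w : ℕ, w < 5*k → (pred w ↔ ∃ u : ℕ, u % 5 = 0 ∧ u < w ∧ w ≤ u + d)) :
    ((GG (5*k) d).edgeFinset).card
      = (Finset.univ.filter (fun v : Fin (5*k) => pred v.val)).card := by
  classical
  symm
  apply Finset.card_bij (fun (v : Fin (5*k)) _ =>
    s((⟨pa d v.val, by have := v.isLt; unfold pa; split <;> omega⟩ : Fin (5*k)), v))
  · intro v hv
    simp only [Finset.mem_filter] at hv
    obtain ⟨u, hu1, hu2, hu3⟩ := (hpred v.val v.isLt).1 hv.2
    have hpa : pa d v.val = u := by unfold pa; split <;> omega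
    rw [mem_edgeFinset, mem_edgeSet]
    apply GG_adj.2
    refine ⟨?_, Or.inl ⟨?_, ?_, ?_⟩⟩
    · intro hcon
      have := congrArg Fin.val hcon
      simp only [] at this
      omega
    · show pa d v.val % 5 = 0; omega
    · show pa d v.val < v.val; omega
    · show v.val ≤ pa d v.val + d; omega
  · intro a ha b hb hab
    simp only [Finset.mem_filter] at ha hb
    have hpa_lt : ∀ w : Fin (5*k), pred w.val → pa d w.val < w.val := by
      intro w hw
      obtain ⟨u, hu1, hu2, hu3⟩ := (hpred w.val w.isLt).1 hw
      unfold pa; split <;> omega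
    rcases Sym2.eq_iff.1 hab with ⟨h1, h2⟩ | ⟨h1, h2⟩
    · exact h2
    · have ha' := hpa_lt a ha.2
      have hb' := hpa_lt b hb.2
      have e1 : pa d a.val = b.val := by simpa using congrArg Fin.val h1
      have e2 : a.val = pa d b.val := by simpa using congrArg Fin.val h2
      exact Fin.ext (by omega)
  · intro e he
    rw [mem_edgeFinset] at he
    induction e using Sym2.ind with
    | _ u v =>
      rw [mem_edgeSet] at he
      rcases GG_adj.1 he with ⟨hne, h | h⟩
      · obtain ⟨h1, h2, h3⟩ := h
        refine ⟨v, Finset.mem_filter.2 ⟨Finset.mem_univ _,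
          (hpred v.val v.isLt).2 ⟨u.val, h1, h2, h3⟩⟩, ?_⟩
        have hpa : pa d v.val = u.val := by unfold pa; split <;> omega
        rw [Sym2.eq_iff]; left
        exact ⟨Fin.ext hpa, rfl⟩
      · obtain ⟨h1, h2, h3⟩ := h
        refine ⟨u, Finset.mem_filter.2 ⟨Finset.mem_univ _,
          (hpred u.val u.isLt).2 ⟨v.val, h1, h2, h3⟩⟩, ?_⟩
        have hpa : pa d u.val = v.val := by unfold pa; split <;> omega
        rw [Sym2.eq_iff]; right
        exact ⟨Fin.ext hpa, rfl⟩

lemma nbhd_pendant {v : Fin (5*k)} (hv : v.val % 5 ≠ 0) :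
    (GG (5*k) 5).neighborSet v = {(⟨5*(v.val/5), by have := v.isLt; omega⟩ : Fin (5*k))} := by
  ext w
  simp only [mem_neighborSet, Set.mem_singleton_iff]
  constructor
  · intro h
    rcases GG_adj.1 h with ⟨hne, ⟨h1,h2,h3⟩ | ⟨h1,h2,h3⟩⟩
    · omega
    · exact Fin.ext (by show w.val = 5*(v.val/5); omega)
  · intro h
    subst h
    apply GG_adj.2
    refine ⟨?_, Or.inr ⟨?_, ?_, ?_⟩⟩
    · intro hcon; have := congrArg Fin.val hcon; simp only [] at this; omega
    · show 5*(v.val/5) % 5 = 0; omega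
    · show 5*(v.val/5) < v.val; omega
    · show v.val ≤ 5*(v.val/5) + 5; omega

lemma two_le_spine {v : Fin (5*k)} (hv : v.val % 5 = 0) :
    2 ≤ ((GG (5*k) 5).neighborSet v).ncard := by
  have hb : v.val + 2 < 5*k := by have := v.isLt; omega
  set w1 : Fin (5*k) := ⟨v.val+1, by omega⟩
  set w2 : Fin (5*k) := ⟨v.val+2, by omega⟩
  have h1 : w1 ∈ (GG (5*k) 5).neighborSet v := by
    apply GG_adj.2
    exact ⟨by intro hcon; have := congrArg Fin.val hcon; simp only [w1] at this; omega,
      Or.inl ⟨hv, by show v.val < v.val+1; omega, by show v.val+1 ≤ v.val+5; omega⟩⟩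
  have h2 : w2 ∈ (GG (5*k) 5).neighborSet v := by
    apply GG_adj.2
    exact ⟨by intro hcon; have := congrArg Fin.val hcon; simp only [w2] at this; omega,
      Or.inl ⟨hv, by show v.val < v.val+2; omega, by show v.val+2 ≤ v.val+5; omega⟩⟩
  have hsub : ({w1, w2} : Set (Fin (5*k))) ⊆ (GG (5*k) 5).neighborSet v := by
    intro x hx; rcases hx with rfl | rfl; exacts [h1, h2]
  calc 2 = ({w1, w2} : Set (Fin (5*k))).ncard := by
            rw [Set.ncard_pair (by
              intro hcon; have := congrArg Fin.val hcon; simp only [w1, w2] at this; omega)]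
       _ ≤ _ := Set.ncard_le_ncard hsub (Set.toFinite _)

lemma internal_set :
    {v : Fin (5*k) | 2 ≤ ((GG (5*k) 5).neighborSet v).ncard} = {v | v.val % 5 = 0} := by
  ext v
  simp only [Set.mem_setOf_eq]
  constructor
  · intro h
    by_contra hv
    rw [nbhd_pendant hv, Set.ncard_singleton] at h
    omega
  · exact two_le_spine

lemma deg_le_two (v : Fin (5*k)) : ((GG (5*k) 2).neighborSet v).ncard ≤ 2 := by
  by_cases hv : v.val % 5 = 0
  · have hb : v.val + 2 < 5*k := by have := v.isLt; omega
    have hsub : (GG (5*k) 2).neighborSet v ⊆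
        {(⟨v.val+1, by omega⟩ : Fin (5*k)), ⟨v.val+2, by omega⟩} := by
      intro w hw
      rcases GG_adj.1 hw with ⟨hne, ⟨h1,h2,h3⟩ | ⟨h1,h2,h3⟩⟩
      · have : w.val = v.val + 1 ∨ w.val = v.val + 2 := by omega
        rcases this with h | h
        · exact Or.inl (Fin.ext (by simpa using h))
        · exact Or.inr (Fin.ext (by simpa using h))
      · exact absurd h1 (by omega)
    calc ((GG (5*k) 2).neighborSet v).ncard ≤ _ := Set.ncard_le_ncard hsub (Set.toFinite _)
      _ ≤ 2 := by
        apply le_trans (Set.ncard_insert_le _ _)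
        simp
  · have hsub : (GG (5*k) 2).neighborSet v ⊆
        {(⟨5*(v.val/5), by have := v.isLt; omega⟩ : Fin (5*k))} := by
      intro w hw
      rcases GG_adj.1 hw with ⟨hne, ⟨h1,h2,h3⟩ | ⟨h1,h2,h3⟩⟩
      · omega
      · exact Fin.ext (by show w.val = 5*(v.val/5); omega)
    calc ((GG (5*k) 2).neighborSet v).ncard ≤ _ := Set.ncard_le_ncard hsub (Set.toFinite _)
      _ ≤ 2 := by rw [Set.ncard_singleton]; omega

lemma unique_smaller (d : ℕ) (hd : d ≤ 5) :
    ∀ v x y : Fin (5*k), (GG (5*k) d).Adj v x → (GG (5*k) d).Adj v y →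
      x.val < v.val → y.val < v.val → x = y := by
  intro v x y hx hy hxv hyv
  rcases GG_adj.1 hx with ⟨_, ⟨h1,h2,h3⟩ | ⟨h1,h2,h3⟩⟩
  · omega
  rcases GG_adj.1 hy with ⟨_, ⟨g1,g2,g3⟩ | ⟨g1,g2,g3⟩⟩
  · omega
  exact Fin.ext (by omega)

lemma connected_G (hk : 0 < k) : (GG (5*k) 5).Connected := by
  have h0 : (0:ℕ) < 5*k := by omega
  have key : ∀ m : ℕ, ∀ v : Fin (5*k), v.val = m → (GG (5*k) 5).Reachable v ⟨0, h0⟩ := by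
    intro m
    induction m using Nat.strong_induction_on with
    | _ m ih =>
      intro v hv
      by_cases hz : v.val = 0
      · have hveq : v = ⟨0,h0⟩ := Fin.ext hz
        rw [hveq]
      · set p : Fin (5*k) := ⟨if v.val % 5 = 0 then v.val - 5 else 5*(v.val/5),
          by have := v.isLt; split <;> omega⟩ with hp
        have hadj : (GG (5*k) 5).Adj v p := by
          apply GG_adj.2
          constructor
          · intro hcon
            have := congrArg Fin.val hcon
            simp only [hp] at this
            split at this <;> omega
          · right
            refine ⟨?_, ?_, ?_⟩
            · show p.val % 5 = 0
              simp only [hp]; split <;> omega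
            · show p.val < v.val
              simp only [hp]; split <;> omega
            · show v.val ≤ p.val + 5
              simp only [hp]; split <;> omega
        have hplt : p.val < m := by
          simp only [hp]; split <;> omega
        exact (hadj.reachable).trans (ih p.val hplt p rfl)
  haveI : Nonempty (Fin (5*k)) := ⟨⟨0, h0⟩⟩
  exact Connected.mk fun u v => (key u.val u rfl).trans (key v.val v rfl).symm

lemma opt_core (Q : SimpleGraph (Fin (5*k))) (hQ : Q ≤ GG (5*k) 5)
    (hdeg : ∀ v, (Q.neighborSet v).ncard ≤ 2) : Q.edgeSet.ncard ≤ 2*k := by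
  classical
  rw [Set.ncard_eq_toFinset_card' Q.edgeSet]
  set E := Q.edgeSet.toFinset with hE
  have hmem : ∀ e ∈ E, e ∈ Q.edgeSet := by intro e he; rwa [hE, Set.mem_toFinset] at he
  have hcard := Finset.card_le_mul_card_image
    (f := fun e : Sym2 (Fin (5*k)) => Sym2.inf e) E 2 ?hfib
  · refine le_trans hcard ?_
    have himg : E.image (fun e => Sym2.inf e) ⊆
        Finset.univ.filter (fun v : Fin (5*k) => v.val % 5 = 0) := by
      intro a ha
      obtain ⟨e, he, hfe⟩ := Finset.mem_image.1 ha
      have heQ := hmem e he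
      induction e using Sym2.ind with
      | _ u v =>
        rw [mem_edgeSet] at heQ
        have hG := hQ heQ
        rcases GG_adj.1 hG with ⟨hne, ⟨h1,h2,h3⟩ | ⟨h1,h2,h3⟩⟩
        · have : Sym2.inf s(u,v) = u := by
            rw [Sym2.inf_mk]
            exact inf_eq_left.2 (le_of_lt (by exact h2))
          rw [this] at hfe
          exact Finset.mem_filter.2 ⟨Finset.mem_univ _, by rw [← hfe]; exact h1⟩
        · have : Sym2.inf s(u,v) = v := by
            rw [Sym2.inf_mk]
            exact inf_eq_right.2 (le_of_lt (by exact h2))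
          rw [this] at hfe
          exact Finset.mem_filter.2 ⟨Finset.mem_univ _, by rw [← hfe]; exact h1⟩
    calc 2 * (E.image _).card ≤ 2 * (Finset.univ.filter
            (fun v : Fin (5*k) => v.val % 5 = 0)).card :=
          Nat.mul_le_mul_left 2 (Finset.card_le_card himg)
      _ ≤ 2 * k := by rw [spine_card]
  · intro a ha
    have hsub : E.filter (fun e => Sym2.inf e = a) ⊆
        (Q.neighborSet a).toFinset.image (fun w => s(a, w)) := by
      intro e he
      rw [Finset.mem_filter] at he
      obtain ⟨heE, hinf⟩ := he
      have heQ := hmem e heE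
      induction e using Sym2.ind with
      | _ u v =>
        rw [mem_edgeSet] at heQ
        rw [Sym2.inf_mk] at hinf
        rcases le_total u v with hle | hle
        · have hua : u = a := by rwa [inf_eq_left.2 hle] at hinf
          subst hua
          exact Finset.mem_image.2 ⟨v, by rw [Set.mem_toFinset]; exact heQ, rfl⟩
        · have hva : v = a := by rwa [inf_eq_right.2 hle] at hinf
          subst hva
          exact Finset.mem_image.2 ⟨u, by rw [Set.mem_toFinset]; exact heQ.symm,
            Sym2.eq_swap⟩
    calc (E.filter (fun e => Sym2.inf e = a)).card
        ≤ ((Q.neighborSet a).toFinset.image (fun w => s(a, w))).card :=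
          Finset.card_le_card hsub
      _ ≤ (Q.neighborSet a).toFinset.card := Finset.card_image_le
      _ ≤ 2 := by rw [← Set.ncard_eq_toFinset_card']; exact hdeg a

lemma bpg : IsBipartitePermutationGraph (GG (5*k) 5) := by
  refine ⟨{v | (v.val + 4)/5 % 2 = 0}, {v | (v.val + 4)/5 % 2 = 1}, Fin.val, Fin.val,
    ⟨?_, ?_⟩, ?_, ?_, ?_⟩
  · intro v
    simp only [Set.mem_setOf_eq]
    omega
  · intro u v huv
    rcases GG_adj.1 huv with ⟨hne, ⟨h1,h2,h3⟩ | ⟨h1,h2,h3⟩⟩ <;>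
      · simp only [Set.mem_setOf_eq]
        omega
  · exact fun a _ b _ h => Fin.ext h
  · exact fun a _ b _ h => Fin.ext h
  · intro a a' b b' ha ha' hb hb' hab hab' h1 h2
    exfalso
    simp only [Set.mem_setOf_eq] at ha ha' hb hb'
    rcases GG_adj.1 hab with ⟨_, ⟨e1,e2,e3⟩ | ⟨e1,e2,e3⟩⟩ <;>
      rcases GG_adj.1 hab' with ⟨_, ⟨f1,f2,f3⟩ | ⟨f1,f2,f3⟩⟩ <;>
      omega

lemma internalCount_G (hk : 0 < k) : internalCount (GG (5*k) 5) = k := by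
  unfold internalCount
  rw [internal_set]
  have : {v : Fin (5*k) | v.val % 5 = 0}
      = ↑(Finset.univ.filter (fun v : Fin (5*k) => v.val % 5 = 0)) := by
    ext v; simp
  rw [this, Set.ncard_coe_finset, spine_card]

lemma Pcard (hk : 0 < k) : (GG (5*k) 2).edgeSet.ncard = 2*k := by
  rw [Set.ncard_eq_toFinset_card' ((GG (5*k) 2).edgeSet)]
  have h := edge_card (k := k) 2 (by norm_num) (by norm_num)
    (fun w => w % 5 = 1 ∨ w % 5 = 2)
    (by
      intro w hw
      constructor
      · intro h
        exact ⟨5*(w/5), by omega, by omega, by omega⟩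
      · rintro ⟨u, h1, h2, h3⟩
        omega)
  rw [show ((GG (5*k) 2).edgeSet.toFinset) = (GG (5*k) 2).edgeFinset from rfl, h, pend12_card]

lemma Gcard (hk : 0 < k) : (GG (5*k) 5).edgeSet.ncard = 5*k - 1 := by
  rw [Set.ncard_eq_toFinset_card' ((GG (5*k) 5).edgeSet)]
  have h := edge_card (k := k) 5 (by norm_num) (by norm_num) (fun w => 0 < w)
    (by
      intro w hw
      constructor
      · intro h
        exact ⟨if w % 5 = 0 then w - 5 else 5*(w/5), by split <;> omega,
          by split <;> omega, by split <;> omega⟩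
      · rintro ⟨u, h1, h2, h3⟩
        omega)
  rw [show ((GG (5*k) 5).edgeSet.toFinset) = (GG (5*k) 5).edgeFinset from rfl, h]
  have h0 : (0:ℕ) < 5*k := by omega
  have : Finset.univ.filter (fun v : Fin (5*k) => 0 < v.val)
      = Finset.univ.erase ⟨0, h0⟩ := by
    ext w
    simp only [Finset.mem_filter, Finset.mem_univ, true_and, Finset.mem_erase, and_true]
    constructor
    · intro h hcon
      have := congrArg Fin.val hcon
      simp only [] at this
      omega
    · intro h
      rcases Nat.eq_zero_or_pos w.val with h0' | h0'
      · exact absurd (Fin.ext h0') h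
      · exact h0'
  rw [this, Finset.card_erase_of_mem (Finset.mem_univ _)]
  simp

lemma G_isTree (hk : 0 < k) : (GG (5*k) 5).IsTree :=
  ⟨connected_G hk, acyclic_of_unique_smaller _ (unique_smaller 5 le_rfl)⟩

/-- Any spanning tree of our caterpillar has at most `k` internal vertices. -/
lemma spanning_internal_le (hk : 0 < k) (T : SimpleGraph (Fin (5*k)))
    (hT : IsSpanningTreeOf (GG (5*k) 5) T) : internalCount T ≤ k := by
  unfold internalCount
  have hsub : {v : Fin (5*k) | 2 ≤ (T.neighborSet v).ncard}
      ⊆ {v : Fin (5*k) | 2 ≤ ((GG (5*k) 5).neighborSet v).ncard} := by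
    intro v hv
    simp only [Set.mem_setOf_eq] at hv ⊢
    refine le_trans hv (Set.ncard_le_ncard ?_ (Set.toFinite _))
    intro w hw
    exact hT.1 hw
  calc {v : Fin (5*k) | 2 ≤ (T.neighborSet v).ncard}.ncard
      ≤ {v : Fin (5*k) | 2 ≤ ((GG (5*k) 5).neighborSet v).ncard}.ncard :=
        Set.ncard_le_ncard hsub (Set.toFinite _)
    _ = k := internalCount_G hk

lemma master (hk : 0 < k) :
    (GG (5*k) 5).Connected ∧ IsBipartitePermutationGraph (GG (5*k) 5) ∧
    IsOptPathCoverOf (GG (5*k) 5) (GG (5*k) 2) ∧ (GG (5*k) 2).edgeSet.ncard = 2*k ∧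
    (∃ T, IsSpanningTreeOf (GG (5*k) 5) T ∧ internalCount T = k) ∧
    (∀ T, IsSpanningTreeOf (GG (5*k) 5) T → internalCount T ≤ k) := by
  have hle : GG (5*k) 2 ≤ GG (5*k) 5 := GG_mono (by norm_num)
  refine ⟨connected_G hk, bpg, ⟨⟨hle, ?_, deg_le_two⟩, ?_⟩, Pcard hk, ?_, spanning_internal_le hk⟩
  · exact acyclic_of_unique_smaller _ (unique_smaller 2 (by norm_num))
  · intro Q hQ
    rw [Pcard hk]
    exact opt_core Q hQ.1 hQ.2.2
  · exact ⟨GG (5*k) 5, ⟨le_rfl, G_isTree hk⟩, internalCount_G hk⟩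

end S19

theorem stmt19 :
    (∀ k : ℕ, 0 < k → ∃ G : SimpleGraph (Fin (5 * k)),
      G.Connected ∧ IsBipartitePermutationGraph G ∧
      ∃ P : SimpleGraph (Fin (5 * k)), IsOptPathCoverOf G P ∧
        (∃ T, IsSpanningTreeOf G T ∧ internalCount T = P.edgeSet.ncard - k) ∧
        (∀ T, IsSpanningTreeOf G T → internalCount T ≤ P.edgeSet.ncard - k)) ∧
    (∀ c : ℕ, ∃ (n : ℕ) (G : SimpleGraph (Fin n)) (P : SimpleGraph (Fin n)),
      G.Connected ∧ IsBipartitePermutationGraph G ∧ IsOptPathCoverOf G P ∧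
      ∀ T, IsSpanningTreeOf G T → internalCount T + c < P.edgeSet.ncard) := by
  constructor
  · intro k hk
    obtain ⟨hconn, hbpg, hopt, hpcard, ⟨T, hT, hTeq⟩, hall⟩ := S19.master hk
    refine ⟨S19.GG (5*k) 5, hconn, hbpg, S19.GG (5*k) 2, hopt, ⟨T, hT, ?_⟩, ?_⟩
    · rw [hpcard] at *
      omega
    · intro T' hT'
      have := hall T' hT'
      rw [hpcard]
      omega
  · intro c
    have hk : 0 < c + 1 := Nat.succ_pos c
    obtain ⟨hconn, hbpg, hopt, hpcard, _, hall⟩ := S19.master hk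
    refine ⟨5*(c+1), S19.GG (5*(c+1)) 5, S19.GG (5*(c+1)) 2, hconn, hbpg, hopt, ?_⟩
    intro T hT
    have := hall T hT
    rw [hpcard]
    omega
end
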